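/- arXiv:1605.01017 — 6 statements merged into one kernel-verified Lean document; each statement's English description precedes it below -/
import Mathlib

section
/- The scaled KtW system has a positive equilibrium (all coordinates strictly positive) if and only if w < r_n < r_j for all 1 ≤ j ≤ n-1 and Σ_{i=1}^{n-1} e_i < q < r_n - w; moreover, when it exists it is unique and given by H_j* = e_j, P_j* = r_j - r_n for j ≠ n, H_n* = q - Σ_{i=1}^{n-1} e_i, Z* = r_n - w - q. -/
/-- The equilibrium equations of the scaled KtW system with `m+1` bacteria
(the last one virus-resistant), `m` viruses and one zooplankton. -/
def KtWEquilibrium (m : ℕ) (r : Fin (m+1) → ℝ) (w : ℝ) (ν e : Fin m → ℝ)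
    (lam q : ℝ) (H : Fin (m+1) → ℝ) (P : Fin m → ℝ) (Z : ℝ) : Prop :=
  (∀ i : Fin m,
    H i.castSucc * (r i.castSucc - w - ∑ j, H j) - H i.castSucc * P i - H i.castSucc * Z = 0) ∧
  H (Fin.last m) * (r (Fin.last m) - w - ∑ j, H j) - H (Fin.last m) * Z = 0 ∧
  (∀ i : Fin m, ν i * P i * (H i.castSucc - e i) = 0) ∧
  lam * Z * (∑ j, H j - q) = 0

lemma ktw_aux (m : ℕ) (r : Fin (m+1) → ℝ) (w : ℝ) (ν e : Fin m → ℝ) (lam q : ℝ)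
    (hν : ∀ i, 0 < ν i) (hlam : 0 < lam)
    (H : Fin (m+1) → ℝ) (P : Fin m → ℝ) (Z : ℝ)
    (hH : ∀ i, 0 < H i) (hP : ∀ j, 0 < P j) (hZ : 0 < Z)
    (heq : KtWEquilibrium m r w ν e lam q H P Z) :
    (∀ i : Fin m, H i.castSucc = e i ∧ P i = r i.castSucc - r (Fin.last m)) ∧
      H (Fin.last m) = q - ∑ i, e i ∧ Z = r (Fin.last m) - w - q := by
  obtain ⟨h1, h2, h3, h4⟩ := heq
  have hS : ∑ j, H j = q := by
    rcases mul_eq_zero.1 h4 with h | h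
    · rcases mul_eq_zero.1 h with h | h
      · exact absurd h hlam.ne'
      · exact absurd h hZ.ne'
    · linarith
  have hHe : ∀ i : Fin m, H i.castSucc = e i := by
    intro i
    rcases mul_eq_zero.1 (h3 i) with h | h
    · rcases mul_eq_zero.1 h with h | h
      · exact absurd h (hν i).ne'
      · exact absurd h (hP i).ne'
    · linarith
  have hZ' : Z = r (Fin.last m) - w - q := by
    rw [hS] at h2
    have h2' : H (Fin.last m) * (r (Fin.last m) - w - q - Z) = 0 := by
      linear_combination h2
    rcases mul_eq_zero.1 h2' with h | h
    · exact absurd h (hH (Fin.last m)).ne'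
    · linarith
  have hPi : ∀ i : Fin m, P i = r i.castSucc - r (Fin.last m) := by
    intro i
    have h := h1 i
    rw [hS] at h
    have h' : H i.castSucc * (r i.castSucc - w - q - P i - Z) = 0 := by
      linear_combination h
    rcases mul_eq_zero.1 h' with h'' | h''
    · exact absurd h'' (hH i.castSucc).ne'
    · linarith
  have hHl : H (Fin.last m) = q - ∑ i, e i := by
    have hsum := Fin.sum_univ_castSucc H
    rw [hS] at hsum
    simp only [hHe] at hsum
    linarith
  exact ⟨fun i => ⟨hHe i, hPi i⟩, hHl, hZ'⟩

theorem ktw_positive_equilibrium_iff_and_unique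
    (m : ℕ) (hm : 0 < m) (r : Fin (m+1) → ℝ) (w : ℝ) (ν e : Fin m → ℝ) (lam q : ℝ)
    (hr : ∀ i, 0 < r i) (hw : 0 < w) (hν : ∀ i, 0 < ν i) (he : ∀ i, 0 < e i)
    (hlam : 0 < lam) (hq : 0 < q) :
    ((∃ (H : Fin (m+1) → ℝ) (P : Fin m → ℝ) (Z : ℝ),
        (∀ i, 0 < H i) ∧ (∀ j, 0 < P j) ∧ 0 < Z ∧
        KtWEquilibrium m r w ν e lam q H P Z) ↔
      ((w < r (Fin.last m) ∧ ∀ i : Fin m, r (Fin.last m) < r i.castSucc) ∧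
        (∑ i, e i < q ∧ q < r (Fin.last m) - w))) ∧
    (∀ (H : Fin (m+1) → ℝ) (P : Fin m → ℝ) (Z : ℝ),
      (∀ i, 0 < H i) → (∀ j, 0 < P j) → 0 < Z →
      KtWEquilibrium m r w ν e lam q H P Z →
      (∀ i : Fin m, H i.castSucc = e i ∧ P i = r i.castSucc - r (Fin.last m)) ∧
        H (Fin.last m) = q - ∑ i, e i ∧ Z = r (Fin.last m) - w - q) := by
  constructor
  · constructor
    · rintro ⟨H, P, Z, hH, hP, hZ, heq⟩
      obtain ⟨hall, hHl, hZ'⟩ := ktw_aux m r w ν e lam q hν hlam H P Z hH hP hZ heq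
      have hZpos : 0 < r (Fin.last m) - w - q := hZ' ▸ hZ
      refine ⟨⟨by linarith, fun i => ?_⟩, ?_, by linarith⟩
      · have := (hall i).2 ▸ hP i
        linarith
      · have := hHl ▸ hH (Fin.last m)
        linarith
    · rintro ⟨⟨hw', hri⟩, hsum, hqlt⟩
      refine ⟨Fin.snoc e (q - ∑ i, e i), fun i => r i.castSucc - r (Fin.last m),
        r (Fin.last m) - w - q, ?_, fun i => by simpa using sub_pos.2 (hri i), by linarith, ?_⟩
      · intro i
        induction i using Fin.lastCases with
        | last => simp; linarith
        | cast i => simpa using he i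
      · have hS : ∑ j, Fin.snoc (α := fun _ => ℝ) e (q - ∑ i, e i) j = q := by
          rw [Fin.sum_univ_castSucc]
          simp
        refine ⟨fun i => ?_, ?_, fun i => ?_, ?_⟩ <;> simp only [hS] <;> simp <;> ring
  · intro H P Z hH hP hZ heq
    exact ktw_aux m r w ν e lam q hν hlam H P Z hH hP hZ heq
end

section
/- Let E* = (H*, P*, Z*) be a positive equilibrium of the scaled KtW system and define V(H,P,Z) = Σ_{i=1}^n U(H_i, H_i*) + Σ_{j=1}^{n−1} (1/n_j) U(P_j, P_j*) + (1/λ) U(Z, Z*), where U(x,x*) = x − x* − x* log(x/x*). Then the derivative of V along any positive solution equals −(Σ_i H_i(t) − Σ_i H_i*)², i.e. dV/dt = −(H(t) − H*)² ≤ 0, where H = Σ_i H_i. -/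
/-- The Volterra function `U(x, x*) = x - x* - x* log (x / x*)`. -/
noncomputable def volterraU (x xs : ℝ) : ℝ := x - xs - xs * Real.log (x / xs)

lemma volterra_hasDerivAt (f : ℝ → ℝ) (f' xs t : ℝ) (hf : HasDerivAt f f' t)
    (hft : 0 < f t) (hxs : 0 < xs) :
    HasDerivAt (fun s => volterraU (f s) xs) (f' * (1 - xs / f t)) t := by
  have h1 : HasDerivAt (fun s => f s / xs) (f' / xs) t := hf.div_const xs
  have hne : f t / xs ≠ 0 := by positivity
  have h2 := h1.log hne
  have h3 := (hf.sub_const xs).sub (h2.const_mul xs)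
  refine h3.congr_deriv (Eq.symm ?_)
  field_simp

theorem ktw_lyapunov_derivative
    (m : ℕ) (hm : 0 < m) (r : Fin (m+1) → ℝ) (w : ℝ) (ν e : Fin m → ℝ) (lam q : ℝ)
    (hr : ∀ i, 0 < r i) (hw : 0 < w) (hν : ∀ i, 0 < ν i) (he : ∀ i, 0 < e i)
    (hlam : 0 < lam) (hq : 0 < q)
    -- a positive equilibrium (H*, P*, Z*)
    (Hs : Fin (m+1) → ℝ) (Ps : Fin m → ℝ) (Zs : ℝ)
    (hHs : ∀ i, 0 < Hs i) (hPs : ∀ j, 0 < Ps j) (hZs : 0 < Zs)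
    (heq1 : ∀ i : Fin m, r i.castSucc - w - (∑ j, Hs j) - Ps i - Zs = 0)
    (heq2 : r (Fin.last m) - w - (∑ j, Hs j) - Zs = 0)
    (heq3 : ∀ i : Fin m, Hs i.castSucc = e i)
    (heq4 : (∑ j, Hs j) = q)
    -- a positive solution
    (H : Fin (m+1) → ℝ → ℝ) (P : Fin m → ℝ → ℝ) (Z : ℝ → ℝ)
    (hH : ∀ i : Fin m, ∀ t ∈ Set.Ici (0:ℝ), HasDerivAt (H i.castSucc)
      (H i.castSucc t * (r i.castSucc - w - ∑ j, H j t)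
        - H i.castSucc t * P i t - H i.castSucc t * Z t) t)
    (hHn : ∀ t ∈ Set.Ici (0:ℝ), HasDerivAt (H (Fin.last m))
      (H (Fin.last m) t * (r (Fin.last m) - w - ∑ j, H j t) - H (Fin.last m) t * Z t) t)
    (hPode : ∀ i : Fin m, ∀ t ∈ Set.Ici (0:ℝ), HasDerivAt (P i)
      (ν i * P i t * (H i.castSucc t - e i)) t)
    (hZode : ∀ t ∈ Set.Ici (0:ℝ), HasDerivAt Z (lam * Z t * (∑ j, H j t - q)) t)
    (hpos : ∀ t ∈ Set.Ici (0:ℝ), (∀ i, 0 < H i t) ∧ (∀ j, 0 < P j t) ∧ 0 < Z t)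
    -- the Lyapunov function
    (V : ℝ → ℝ)
    (hV : ∀ t, V t = ∑ i, volterraU (H i t) (Hs i)
      + ∑ j, (1 / ν j) * volterraU (P j t) (Ps j) + (1 / lam) * volterraU (Z t) Zs) :
    ∀ t ∈ Set.Ici (0:ℝ), HasDerivAt V (-((∑ i, H i t) - ∑ i, Hs i) ^ 2) t := by
  intro t ht
  obtain ⟨hHpos, hPpos, hZpos⟩ := hpos t ht
  have hVf : V = fun s => ∑ i, volterraU (H i s) (Hs i)
      + ∑ j, (1 / ν j) * volterraU (P j s) (Ps j) + (1 / lam) * volterraU (Z s) Zs :=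
    funext hV
  set S := ∑ j, H j t with hS
  set Ss := ∑ j, Hs j with hSs
  -- derivatives of each H i
  set F : Fin (m+1) → ℝ := fun i => Fin.lastCases
      (H (Fin.last m) t * (r (Fin.last m) - w - S) - H (Fin.last m) t * Z t)
      (fun i => H i.castSucc t * (r i.castSucc - w - S)
        - H i.castSucc t * P i t - H i.castSucc t * Z t) i with hF
  have hFd : ∀ i, HasDerivAt (H i) (F i) t := by
    intro i
    induction i using Fin.lastCases with
    | last => simpa [hF] using hHn t ht
    | cast i => simpa [hF] using hH i t ht
  have hHd : HasDerivAt (fun s => ∑ i, volterraU (H i s) (Hs i))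
      (∑ i, F i * (1 - Hs i / H i t)) t :=
    HasDerivAt.fun_sum (fun i _ => volterra_hasDerivAt (H i) (F i) (Hs i) t (hFd i) (hHpos i) (hHs i))
  have hPd : HasDerivAt (fun s => ∑ j, (1 / ν j) * volterraU (P j s) (Ps j))
      (∑ j, (1 / ν j) * (ν j * P j t * (H j.castSucc t - e j) * (1 - Ps j / P j t))) t :=
    HasDerivAt.fun_sum (fun j _ =>
      (volterra_hasDerivAt (P j) _ (Ps j) t (hPode j t ht) (hPpos j) (hPs j)).const_mul _)
  have hZd : HasDerivAt (fun s => (1 / lam) * volterraU (Z s) Zs)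
      ((1 / lam) * (lam * Z t * (S - q) * (1 - Zs / Z t))) t :=
    (volterra_hasDerivAt Z _ Zs t (hZode t ht) hZpos hZs).const_mul _
  have hVd := (hHd.add hPd).add hZd
  rw [hVf]
  refine hVd.congr_deriv (Eq.symm ?_)
  -- algebra
  have e1 : ∀ i : Fin m, F i.castSucc * (1 - Hs i.castSucc / H i.castSucc t)
      = (H i.castSucc t - Hs i.castSucc) * ((Ss - S) + (Ps i - P i t) + (Zs - Z t)) := by
    intro i
    have hne : H i.castSucc t ≠ 0 := (hHpos i.castSucc).ne'
    have hFi : F i.castSucc = H i.castSucc t * ((Ss - S) + (Ps i - P i t) + (Zs - Z t)) := by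
      simp only [hF, Fin.lastCases_castSucc]
      linear_combination H i.castSucc t * heq1 i
    rw [hFi]
    field_simp
  have e2 : F (Fin.last m) * (1 - Hs (Fin.last m) / H (Fin.last m) t)
      = (H (Fin.last m) t - Hs (Fin.last m)) * ((Ss - S) + (Zs - Z t)) := by
    have hne : H (Fin.last m) t ≠ 0 := (hHpos _).ne'
    have hFl : F (Fin.last m) = H (Fin.last m) t * ((Ss - S) + (Zs - Z t)) := by
      simp only [hF, Fin.lastCases_last]
      linear_combination H (Fin.last m) t * heq2
    rw [hFl]
    field_simp
  have e3 : ∀ j : Fin m, (1 / ν j) * (ν j * P j t * (H j.castSucc t - e j) * (1 - Ps j / P j t))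
      = (P j t - Ps j) * (H j.castSucc t - Hs j.castSucc) := by
    intro j
    have hne : P j t ≠ 0 := (hPpos j).ne'
    have hν' : ν j ≠ 0 := (hν j).ne'
    rw [← heq3 j]
    field_simp
  have e4 : (1 / lam) * (lam * Z t * (S - q) * (1 - Zs / Z t)) = (Z t - Zs) * (S - Ss) := by
    have hne : Z t ≠ 0 := hZpos.ne'
    have hlam' : lam ≠ 0 := hlam.ne'
    rw [← heq4]
    field_simp
  rw [Finset.sum_congr rfl (fun j _ => e3 j), e4,
    Fin.sum_univ_castSucc (f := fun i => F i * (1 - Hs i / H i t)), e2,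
    Finset.sum_congr rfl (fun i _ => e1 i)]
  have hsplit : ∑ i : Fin m, (H i.castSucc t - Hs i.castSucc)
      * ((Ss - S) + (Ps i - P i t) + (Zs - Z t))
      = ∑ i : Fin m, ((H i.castSucc t - Hs i.castSucc) * ((Ss - S) + (Zs - Z t))
        + (H i.castSucc t - Hs i.castSucc) * (Ps i - P i t)) :=
    Finset.sum_congr rfl (fun i _ => by ring)
  rw [hsplit, Finset.sum_add_distrib]
  have hsum1 : ∑ i : Fin m, (H i.castSucc t - Hs i.castSucc) * ((Ss - S) + (Zs - Z t))
      + (H (Fin.last m) t - Hs (Fin.last m)) * ((Ss - S) + (Zs - Z t))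
      = (S - Ss) * ((Ss - S) + (Zs - Z t)) := by
    rw [← Fin.sum_univ_castSucc (f := fun i => (H i t - Hs i) * ((Ss - S) + (Zs - Z t))),
      ← Finset.sum_mul, Finset.sum_sub_distrib, ← hS, ← hSs]
  have hsum2 : ∑ i : Fin m, (H i.castSucc t - Hs i.castSucc) * (Ps i - P i t)
      + ∑ j : Fin m, (P j t - Ps j) * (H j.castSucc t - Hs j.castSucc) = 0 := by
    rw [← Finset.sum_add_distrib]
    exact Finset.sum_eq_zero (fun i _ => by ring)
  have goal : ∀ a b c d : ℝ, a + b = (S - Ss) * ((Ss - S) + (Zs - Z t)) → c + d = 0 →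
      -(S - Ss) ^ 2 = a + c + b + d + (Z t - Zs) * (S - Ss) := by
    intro a b c d h1 h2; nlinarith [h1, h2]
  exact goal _ _ _ _ hsum1 hsum2
end

section
/- Every positive solution of the scaled KtW system is bounded above and bounded away from zero: there exist constants 0 < p ≤ P (depending on the initial condition) such that p ≤ x(t) ≤ P for all t ≥ 0 and every component x among H_1,...,H_n, P_1,...,P_{n−1}, Z. -/
open Real Set Finset

lemma phi_lb {a x : ℝ} (ha : 0 < a) (hx : 0 < x) :
    a - a * Real.log a ≤ x - a * Real.log x := by
  have h := Real.log_le_sub_one_of_pos (div_pos hx ha)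
  rw [Real.log_div hx.ne' ha.ne'] at h
  have h2 := mul_le_mul_of_nonneg_left h ha.le
  have h3 : a * (x / a) = x := by field_simp
  nlinarith

lemma x_lower {a x M : ℝ} (ha : 0 < a) (hx : 0 < x)
    (h : x - a * Real.log x ≤ M) : Real.exp (-(M / a)) ≤ x := by
  have h1 : -Real.log x ≤ M / a := by
    rw [le_div_iff₀ ha]; nlinarith
  have h2 : -(M / a) ≤ Real.log x := by linarith
  calc Real.exp (-(M / a)) ≤ Real.exp (Real.log x) := Real.exp_le_exp.mpr h2
    _ = x := Real.exp_log hx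

lemma x_upper {a x M : ℝ} (ha : 0 < a) (hx : 0 < x)
    (h : x - a * Real.log x ≤ M) :
    x ≤ 2 * M - 2 * a + 2 * a * Real.log (2 * a) := by
  have h2a : (0:ℝ) < 2 * a := by linarith
  have h1 := Real.log_le_sub_one_of_pos (div_pos hx h2a)
  rw [Real.log_div hx.ne' h2a.ne'] at h1
  have h2 := mul_le_mul_of_nonneg_left h1 ha.le
  have h3 : a * (x / (2 * a)) = x / 2 := by field_simp
  nlinarith

theorem aux_bounded {ι : Type*} [Fintype ι] [DecidableEq ι] [Nonempty ι] (x xd : ι → ℝ → ℝ) (a c : ι → ℝ)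
    (ha : ∀ k, 0 < a k) (hc : ∀ k, 0 < c k)
    (hx : ∀ k, ∀ t ∈ Set.Ici (0:ℝ), 0 < x k t)
    (hd : ∀ k, ∀ t ∈ Set.Ici (0:ℝ), HasDerivAt (x k) (xd k t) t)
    (hsum : ∀ t ∈ Set.Ici (0:ℝ), ∑ k, c k * (xd k t - a k * (xd k t / x k t)) ≤ 0) :
    ∃ p Pb : ℝ, 0 < p ∧ p ≤ Pb ∧
      ∀ t ∈ Set.Ici (0:ℝ), ∀ k, p ≤ x k t ∧ x k t ≤ Pb := by
  set V : ℝ → ℝ := fun t => ∑ k, c k * (x k t - a k * Real.log (x k t)) with hVdef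
  have hVd : ∀ t ∈ Set.Ici (0:ℝ),
      HasDerivAt V (∑ k, c k * (xd k t - a k * (xd k t / x k t))) t := by
    intro t ht
    apply HasDerivAt.fun_sum
    intro k _
    exact ((hd k t ht).sub (((hd k t ht).log (hx k t ht).ne').const_mul (a k))).const_mul (c k)
  have hmono : AntitoneOn V (Set.Ici 0) := by
    apply antitoneOn_of_deriv_nonpos (convex_Ici 0)
    · exact fun t ht => (hVd t ht).continuousAt.continuousWithinAt
    · intro t ht
      rw [interior_Ici] at ht
      exact (hVd t (Set.mem_Ici.2 (le_of_lt ht))).differentiableAt.differentiableWithinAt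
    · intro t ht
      rw [interior_Ici] at ht
      rw [(hVd t (Set.mem_Ici.2 (le_of_lt ht))).deriv]
      exact hsum t (Set.mem_Ici.2 (le_of_lt ht))
  have hVle : ∀ t ∈ Set.Ici (0:ℝ), V t ≤ V 0 := fun t ht =>
    hmono Set.self_mem_Ici ht ht
  set L : ι → ℝ := fun k => c k * (a k - a k * Real.log (a k)) with hLdef
  have hterm_lb : ∀ k, ∀ t ∈ Set.Ici (0:ℝ),
      L k ≤ c k * (x k t - a k * Real.log (x k t)) := fun k t ht =>
    mul_le_mul_of_nonneg_left (phi_lb (ha k) (hx k t ht)) (hc k).le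
  set M : ι → ℝ := fun k => (V 0 - ∑ j, L j + L k) / c k with hMdef
  have hphi : ∀ k, ∀ t ∈ Set.Ici (0:ℝ),
      x k t - a k * Real.log (x k t) ≤ M k := by
    intro k t ht
    have h1 : c k * (x k t - a k * Real.log (x k t)) +
        ∑ j ∈ Finset.univ.erase k, c j * (x j t - a j * Real.log (x j t)) =
        ∑ j, c j * (x j t - a j * Real.log (x j t)) :=
      Finset.add_sum_erase _ (fun j => c j * (x j t - a j * Real.log (x j t))) (Finset.mem_univ k)
    have hVt : V t = ∑ j, c j * (x j t - a j * Real.log (x j t)) := rfl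
    have h2 : ∑ j ∈ Finset.univ.erase k, L j ≤
        ∑ j ∈ Finset.univ.erase k, c j * (x j t - a j * Real.log (x j t)) :=
      Finset.sum_le_sum fun j _ => hterm_lb j t ht
    have h3 : L k + ∑ j ∈ Finset.univ.erase k, L j = ∑ j, L j :=
      Finset.add_sum_erase _ L (Finset.mem_univ k)
    have h4 : c k * (x k t - a k * Real.log (x k t)) ≤ V 0 - ∑ j, L j + L k := by
      have h5 := hVle t ht; rw [hVt] at h5; linarith
    rw [hMdef]
    rw [le_div_iff₀ (hc k)]
    nlinarith [h4]
  obtain ⟨k0⟩ : Nonempty ι := inferInstance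
  set lo : ι → ℝ := fun k => Real.exp (-(M k / a k)) with hlodef
  set hi : ι → ℝ := fun k => 2 * M k - 2 * a k + 2 * a k * Real.log (2 * a k) with hhidef
  have hlo : ∀ k, ∀ t ∈ Set.Ici (0:ℝ), lo k ≤ x k t := fun k t ht =>
    x_lower (ha k) (hx k t ht) (hphi k t ht)
  have hhi : ∀ k, ∀ t ∈ Set.Ici (0:ℝ), x k t ≤ hi k := fun k t ht =>
    x_upper (ha k) (hx k t ht) (hphi k t ht)
  refine ⟨Finset.univ.inf' Finset.univ_nonempty lo,
          Finset.univ.sup' Finset.univ_nonempty hi, ?_, ?_, ?_⟩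
  · exact (Finset.lt_inf'_iff _).mpr fun k _ => Real.exp_pos _
  · calc Finset.univ.inf' Finset.univ_nonempty lo ≤ lo k0 :=
        Finset.inf'_le _ (Finset.mem_univ k0)
    _ ≤ x k0 0 := hlo k0 0 Set.self_mem_Ici
    _ ≤ hi k0 := hhi k0 0 Set.self_mem_Ici
    _ ≤ Finset.univ.sup' Finset.univ_nonempty hi := Finset.le_sup' _ (Finset.mem_univ k0)
  · intro t ht k
    exact ⟨le_trans (Finset.inf'_le _ (Finset.mem_univ k)) (hlo k t ht),
           le_trans (hhi k t ht) (Finset.le_sup' _ (Finset.mem_univ k))⟩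

theorem ktw_positive_solutions_bounded_above_and_below
    (m : ℕ) (hm : 0 < m) (r : Fin (m+1) → ℝ) (w : ℝ) (ν e : Fin m → ℝ) (lam q : ℝ)
    (hr : ∀ i, 0 < r i) (hw : 0 < w) (hν : ∀ i, 0 < ν i) (he : ∀ i, 0 < e i)
    (hlam : 0 < lam) (hq : 0 < q)
    -- existence conditions for the positive equilibrium
    (hc1 : w < r (Fin.last m)) (hc2 : ∀ i : Fin m, r (Fin.last m) < r i.castSucc)
    (hc3 : ∑ i, e i < q) (hc4 : q < r (Fin.last m) - w)
    -- a positive solution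
    (H : Fin (m+1) → ℝ → ℝ) (P : Fin m → ℝ → ℝ) (Z : ℝ → ℝ)
    (hH : ∀ i : Fin m, ∀ t ∈ Set.Ici (0:ℝ), HasDerivAt (H i.castSucc)
      (H i.castSucc t * (r i.castSucc - w - ∑ j, H j t)
        - H i.castSucc t * P i t - H i.castSucc t * Z t) t)
    (hHn : ∀ t ∈ Set.Ici (0:ℝ), HasDerivAt (H (Fin.last m))
      (H (Fin.last m) t * (r (Fin.last m) - w - ∑ j, H j t) - H (Fin.last m) t * Z t) t)
    (hPode : ∀ i : Fin m, ∀ t ∈ Set.Ici (0:ℝ), HasDerivAt (P i)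
      (ν i * P i t * (H i.castSucc t - e i)) t)
    (hZode : ∀ t ∈ Set.Ici (0:ℝ), HasDerivAt Z (lam * Z t * (∑ j, H j t - q)) t)
    (hpos : ∀ t ∈ Set.Ici (0:ℝ), (∀ i, 0 < H i t) ∧ (∀ j, 0 < P j t) ∧ 0 < Z t) :
    ∃ p Pb : ℝ, 0 < p ∧ p ≤ Pb ∧
      ∀ t ∈ Set.Ici (0:ℝ),
        (∀ i, p ≤ H i t ∧ H i t ≤ Pb) ∧
        (∀ j, p ≤ P j t ∧ P j t ≤ Pb) ∧
        (p ≤ Z t ∧ Z t ≤ Pb) := by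
  classical
  set Q : Fin (m+1) → ℝ → ℝ := Fin.snoc P (fun _ => (0:ℝ)) with hQdef
  set aH : Fin (m+1) → ℝ := Fin.snoc e (q - ∑ j, e j) with haHdef
  set X : Fin (m+1) ⊕ (Fin m ⊕ Unit) → ℝ → ℝ := Sum.elim H (Sum.elim P fun _ => Z) with hXdef
  set XD : Fin (m+1) ⊕ (Fin m ⊕ Unit) → ℝ → ℝ :=
    Sum.elim (fun i t => H i t * (r i - w - ∑ j, H j t) - H i t * Q i t - H i t * Z t)
      (Sum.elim (fun j t => ν j * P j t * (H j.castSucc t - e j))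
        (fun _ t => lam * Z t * (∑ j, H j t - q))) with hXDdef
  set A : Fin (m+1) ⊕ (Fin m ⊕ Unit) → ℝ :=
    Sum.elim aH (Sum.elim (fun j => r j.castSucc - r (Fin.last m))
      (fun _ => r (Fin.last m) - w - q)) with hAdef
  set C : Fin (m+1) ⊕ (Fin m ⊕ Unit) → ℝ :=
    Sum.elim (fun _ => (1:ℝ)) (Sum.elim (fun j => 1 / ν j) (fun _ => 1 / lam)) with hCdef
  have hQc : ∀ j : Fin m, Q j.castSucc = P j := by intro j; rw [hQdef]; simp
  have hQl : Q (Fin.last m) = fun _ => (0:ℝ) := by rw [hQdef]; simp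
  have haHc : ∀ j : Fin m, aH j.castSucc = e j := by intro j; rw [haHdef]; simp
  have haHl : aH (Fin.last m) = q - ∑ j, e j := by rw [haHdef]; simp
  have hApos : ∀ k, 0 < A k := by
    rintro (i | j | ⟨⟩) <;> rw [hAdef] <;> simp only [Sum.elim_inl, Sum.elim_inr]
    · induction i using Fin.lastCases with
      | last => rw [haHl]; exact sub_pos.2 hc3
      | cast j => rw [haHc j]; exact he j
    · exact sub_pos.2 (hc2 j)
    · linarith
  have hCpos : ∀ k, 0 < C k := by
    rintro (i | j | ⟨⟩) <;> rw [hCdef] <;> simp only [Sum.elim_inl, Sum.elim_inr]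
    · exact one_pos
    · exact one_div_pos.2 (hν j)
    · exact one_div_pos.2 hlam
  have hXpos : ∀ k, ∀ t ∈ Set.Ici (0:ℝ), 0 < X k t := by
    rintro (i | j | ⟨⟩) t ht <;> rw [hXdef] <;> simp only [Sum.elim_inl, Sum.elim_inr]
    · exact (hpos t ht).1 i
    · exact (hpos t ht).2.1 j
    · exact (hpos t ht).2.2
  have hXd : ∀ k, ∀ t ∈ Set.Ici (0:ℝ), HasDerivAt (X k) (XD k t) t := by
    rintro (i | j | ⟨⟩) t ht <;> rw [hXdef, hXDdef] <;>
      simp only [Sum.elim_inl, Sum.elim_inr]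
    · induction i using Fin.lastCases with
      | last => rw [hQl]; simpa using hHn t ht
      | cast j => rw [hQc j]; exact hH j t ht
    · exact hPode j t ht
    · exact hZode t ht
  have hsum : ∀ t ∈ Set.Ici (0:ℝ),
      ∑ k, C k * (XD k t - A k * (XD k t / X k t)) ≤ 0 := by
    intro t ht
    obtain ⟨hHp, hPp, hZp⟩ := hpos t ht
    have h0 : -((∑ j, H j t) - q)^2 ≤ 0 := by nlinarith [sq_nonneg ((∑ j, H j t) - q)]
    refine le_trans (le_of_eq ?_) h0
    rw [hXdef, hXDdef, hAdef, hCdef]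
    rw [Fintype.sum_sum_type, Fintype.sum_sum_type]
    simp only [Sum.elim_inl, Sum.elim_inr, Finset.univ_unique, Finset.sum_singleton]
    have eH : ∀ i : Fin (m+1),
        (1:ℝ) * ((H i t * (r i - w - ∑ j, H j t) - H i t * Q i t - H i t * Z t)
          - aH i * ((H i t * (r i - w - ∑ j, H j t) - H i t * Q i t - H i t * Z t) / H i t))
        = (H i t - aH i) * (r i - w - (∑ j, H j t) - Q i t - Z t) := by
      intro i
      have h := (hHp i).ne'
      field_simp
    have eP : ∀ j : Fin m,
        (1 / ν j) * ((ν j * P j t * (H j.castSucc t - e j))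
          - (r j.castSucc - r (Fin.last m)) * ((ν j * P j t * (H j.castSucc t - e j)) / P j t))
        = (P j t - (r j.castSucc - r (Fin.last m))) * (H j.castSucc t - e j) := by
      intro j
      have h1 := (hPp j).ne'
      have h2 := (hν j).ne'
      field_simp
    have eZ : (1 / lam) * ((lam * Z t * ((∑ j, H j t) - q))
          - (r (Fin.last m) - w - q) * ((lam * Z t * ((∑ j, H j t) - q)) / Z t))
        = (Z t - (r (Fin.last m) - w - q)) * ((∑ j, H j t) - q) := by
      have h1 := hZp.ne'
      have h2 := hlam.ne'
      field_simp
    rw [Finset.sum_congr rfl fun i _ => eH i, Finset.sum_congr rfl fun j _ => eP j, eZ]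
    rw [Fin.sum_univ_castSucc
      (f := fun i => (H i t - aH i) * (r i - w - (∑ j, H j t) - Q i t - Z t))]
    simp only [hQc, haHc, hQl, haHl]
    have ecomb : (∑ j : Fin m,
          (H j.castSucc t - e j) * (r j.castSucc - w - (∑ i, H i t) - P j t - Z t))
        + (∑ j : Fin m, (P j t - (r j.castSucc - r (Fin.last m))) * (H j.castSucc t - e j))
        = (∑ j : Fin m, (H j.castSucc t - e j)) * (r (Fin.last m) - w - (∑ i, H i t) - Z t) := by
      rw [Finset.sum_mul, ← Finset.sum_add_distrib]
      exact Finset.sum_congr rfl fun j _ => by ring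
    have esplit : (∑ j : Fin m, (H j.castSucc t - e j))
        = (∑ i, H i t) - H (Fin.last m) t - ∑ j, e j := by
      rw [Finset.sum_sub_distrib, Fin.sum_univ_castSucc (f := fun i => H i t)]
      ring
    rw [esplit] at ecomb
    linear_combination ecomb
  obtain ⟨p, Pb, hp, hpP, hbd⟩ := aux_bounded X XD A C hApos hCpos hXpos hXd hsum
  exact ⟨p, Pb, hp, hpP, fun t ht =>
    ⟨fun i => hbd t ht (Sum.inl i),
     fun j => hbd t ht (Sum.inr (Sum.inl j)),
     hbd t ht (Sum.inr (Sum.inr ()))⟩⟩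
end

section
/- For a positive solution of the scaled KtW system that does not converge to E*, every trajectory in its omega limit set satisfies H_n(t) ≡ H_n*, Z(t) ≡ Z*, Σ_{i=1}^n H_i(t) ≡ Σ_i H_i*, and for each i < n the pair (H_i, P_i) solves the conservative planar Volterra system H_i' = H_i(P_i* − P_i), P_i' = n_i P_i(H_i − H_i*). -/
open Real Filter Topology

/-- per-coordinate Lyapunov building block for the KtW system -/
noncomputable def ktwPhi (x a : ℝ) : ℝ := x - a * Real.log x

lemma ktwPhi_ge {x a : ℝ} (ha : 0 < a) (hx : 0 < x) :
    ktwPhi a a ≤ ktwPhi x a := by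
  have h1 : Real.log x - Real.log a ≤ x / a - 1 := by
    have := Real.log_le_sub_one_of_pos (show (0:ℝ) < x / a from div_pos hx ha)
    rwa [Real.log_div (ne_of_gt hx) (ne_of_gt ha)] at this
  have h2 : a * (Real.log x - Real.log a) ≤ a * (x / a - 1) :=
    mul_le_mul_of_nonneg_left h1 ha.le
  have h3 : a * (x / a - 1) = x - a := by field_simp
  unfold ktwPhi; nlinarith [h2]

lemma ktwPhi_upper {x a K : ℝ} (ha : 0 < a) (hx : 0 < x) (h : ktwPhi x a ≤ K) :
    x ≤ 2 * (K - a + a * Real.log (2 * a)) := by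
  have h2a : (0:ℝ) < 2 * a := by linarith
  have h1 : Real.log x - Real.log (2*a) ≤ x / (2*a) - 1 := by
    have := Real.log_le_sub_one_of_pos (show (0:ℝ) < x / (2*a) from div_pos hx h2a)
    rwa [Real.log_div (ne_of_gt hx) (ne_of_gt h2a)] at this
  have h2 : a * Real.log x ≤ a * Real.log (2*a) + a * (x/(2*a)) - a := by nlinarith
  have h3 : a * (x / (2*a)) = x / 2 := by field_simp
  unfold ktwPhi at h; nlinarith

lemma ktwPhi_log_lower {x a K : ℝ} (ha : 0 < a) (hx : 0 < x) (h : ktwPhi x a ≤ K) :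
    -(K / a) ≤ Real.log x := by
  unfold ktwPhi at h
  have h1 : a * Real.log x ≥ -K := by nlinarith
  have h2 : Real.log x ≥ -K / a := by
    rw [ge_iff_le, div_le_iff₀ ha] at *
    nlinarith
  simpa [neg_div] using h2

lemma const_of_bounded_affine {g : ℝ → ℝ} {α M : ℝ}
    (hb : ∀ t, |g t| ≤ M) (haff : ∀ t, g t = g 0 + α * t) : α = 0 := by
  by_contra hne
  have hM0 : 0 ≤ M := le_trans (abs_nonneg _) (hb 0)
  set T : ℝ := (2*M + 1) / |α| with hT
  have hTpos : 0 < T := div_pos (by linarith) (abs_pos.mpr hne)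
  have h1 := hb T
  have h2 := hb 0
  have h3 := haff T
  have habs : |α * T| = |α| * T := by rw [abs_mul, abs_of_pos hTpos]
  have h4 : |α| * T = 2*M + 1 := by rw [hT]; field_simp
  have h5 : |α * T| ≤ |g T| + |g 0| := by
    have : α * T = g T - g 0 := by rw [h3]; ring
    rw [this]; exact abs_sub _ _
  rw [habs, h4] at h5
  linarith

lemma affine_of_hasDerivAt {g : ℝ → ℝ} {α : ℝ}
    (h : ∀ t, HasDerivAt g α t) : ∀ t, g t = g 0 + α * t := by
  intro t
  have key : ∀ x y : ℝ, (fun s => g s - α * s) x = (fun s => g s - α * s) y := by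
    apply is_const_of_deriv_eq_zero
    · intro x
      exact ((h x).sub ((hasDerivAt_id x).const_mul α)).differentiableAt
    · intro x
      have hd : HasDerivAt (fun s => g s - α * s) (α - α * 1) x :=
        (h x).sub ((hasDerivAt_id x).const_mul α)
      simpa using hd.deriv
  have hk := key t 0
  simp only at hk
  linarith [hk]

lemma mapClusterPt_comp_contAt {X Y ι : Type*} [TopologicalSpace X] [TopologicalSpace Y]
    {F : Filter ι} {u : ι → X} {x : X} (h : MapClusterPt x F u)
    {f : X → Y} (hf : ContinuousAt f x) : MapClusterPt (f x) F (fun i => f (u i)) := by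
  have h1 : ClusterPt x (Filter.map u F) := h
  have h2 : Tendsto f (Filter.map u F) (Filter.map (fun i => f (u i)) F) := by
    rw [show Filter.map (fun i => f (u i)) F = Filter.map f (Filter.map u F) from
      (Filter.map_map).symm]
    exact Filter.tendsto_map
  exact h1.map hf h2

lemma mapClusterPt_mem_closed {X ι : Type*} [TopologicalSpace X]
    {F : Filter ι} {u : ι → X} {x : X} (h : MapClusterPt x F u)
    {C : Set X} (hev : ∀ᶠ i in F, u i ∈ C) (hC : IsClosed C) : x ∈ C := by
  have h1 : ClusterPt x (Filter.map u F) := h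
  have h2 : Filter.map u F ≤ Filter.principal C := Filter.le_principal_iff.mpr hev
  have h3 : ClusterPt x (Filter.principal C) := h1.mono h2
  rw [← hC.closure_eq]
  exact mem_closure_iff_clusterPt.mpr h3

lemma mapClusterPt_eq_of_tendsto {X ι : Type*} [TopologicalSpace X] [T2Space X]
    {F : Filter ι} {u : ι → X} {x c : X} (h : MapClusterPt x F u)
    (ht : Tendsto u F (nhds c)) : x = c := by
  have h1 : ClusterPt x (Filter.map u F) := h
  have h3 : ClusterPt x (nhds c) := h1.mono ht
  exact eq_of_nhds_neBot h3

lemma sum_single_le {ι : Type*} [Fintype ι] {f g : ι → ℝ} {C : ℝ}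
    (hfg : ∀ i, g i ≤ f i) (hC : ∑ i, f i ≤ C) (k : ι) :
    f k ≤ C - ∑ i, g i + g k := by
  classical
  have h1 : f k + ∑ i ∈ Finset.univ.erase k, g i ≤ f k + ∑ i ∈ Finset.univ.erase k, f i :=
    add_le_add le_rfl (Finset.sum_le_sum (fun i _ => hfg i))
  rw [Finset.add_sum_erase _ f (Finset.mem_univ k)] at h1
  have h2 : g k + ∑ i ∈ Finset.univ.erase k, g i = ∑ i, g i :=
    Finset.add_sum_erase _ g (Finset.mem_univ k)
  linarith

lemma abs_log_le_of_mem {l u x : ℝ} (hl : 0 < l) (h1 : l ≤ x) (h2 : x ≤ u) :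
    |Real.log x| ≤ max |Real.log l| |Real.log u| := by
  have hx : 0 < x := lt_of_lt_of_le hl h1
  have a1 : Real.log l ≤ Real.log x := Real.log_le_log hl h1
  have a2 : Real.log x ≤ Real.log u := Real.log_le_log hx h2
  rw [abs_le]
  constructor
  · calc -(max |Real.log l| |Real.log u|) ≤ -|Real.log l| := by
          simp [le_max_left]
      _ ≤ Real.log l := neg_abs_le _
      _ ≤ Real.log x := a1
  · calc Real.log x ≤ Real.log u := a2
      _ ≤ |Real.log u| := le_abs_self _
      _ ≤ max |Real.log l| |Real.log u| := le_max_right _ _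

lemma hasDerivAt_ktwPhi_mul {f : ℝ → ℝ} {t A a : ℝ}
    (hf : HasDerivAt f (f t * A) t) (hft : 0 < f t) :
    HasDerivAt (fun s => ktwPhi (f s) a) ((f t - a) * A) t := by
  have hlog : HasDerivAt (fun s => Real.log (f s)) ((f t * A) / f t) t :=
    hf.log (ne_of_gt hft)
  have h := hf.sub (hlog.const_mul a)
  have heq : f t * A - a * (f t * A / f t) = (f t - a) * A := by
    rw [mul_div_cancel_left₀ _ (ne_of_gt hft)]; ring
  rw [heq] at h
  exact h
lemma hasDerivAt_lyap
    (m : ℕ) (r : Fin (m+1) → ℝ) (w q lam : ℝ) (ν e : Fin m → ℝ)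
    (Hs : Fin (m+1) → ℝ) (Ps : Fin m → ℝ) (Zs : ℝ)
    (hHse : ∀ i : Fin m, Hs i.castSucc = e i) (hHsl : Hs (Fin.last m) = q - ∑ i, e i)
    (hPse : ∀ i : Fin m, Ps i = r i.castSucc - r (Fin.last m))
    (hZse : Zs = r (Fin.last m) - w - q)
    (hν : ∀ i, 0 < ν i) (hlam : 0 < lam)
    (H : Fin (m+1) → ℝ → ℝ) (P : Fin m → ℝ → ℝ) (Z : ℝ → ℝ) (t : ℝ)
    (hH : ∀ i : Fin m, HasDerivAt (H i.castSucc)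
      (H i.castSucc t * (r i.castSucc - w - ∑ j, H j t)
        - H i.castSucc t * P i t - H i.castSucc t * Z t) t)
    (hHn : HasDerivAt (H (Fin.last m))
      (H (Fin.last m) t * (r (Fin.last m) - w - ∑ j, H j t) - H (Fin.last m) t * Z t) t)
    (hP : ∀ i : Fin m, HasDerivAt (P i) (ν i * P i t * (H i.castSucc t - e i)) t)
    (hZ : HasDerivAt Z (lam * Z t * (∑ j, H j t - q)) t)
    (hxpos : ∀ i, 0 < H i t) (hppos : ∀ j, 0 < P j t) (hzpos : 0 < Z t) :
    HasDerivAt (fun s => ∑ i, ktwPhi (H i s) (Hs i)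
        + ∑ j, (ν j)⁻¹ * ktwPhi (P j s) (Ps j) + lam⁻¹ * ktwPhi (Z s) Zs)
      (-(∑ j, H j t - q)^2) t := by
  set S : ℝ := ∑ j, H j t with hS
  -- individual derivatives
  have h1 : ∀ j : Fin m, HasDerivAt (fun s => ktwPhi (H j.castSucc s) (Hs j.castSucc))
      ((H j.castSucc t - Hs j.castSucc) * (r j.castSucc - w - S - P j t - Z t)) t := by
    intro j
    apply hasDerivAt_ktwPhi_mul ?_ (hxpos _)
    have heq : H j.castSucc t * (r j.castSucc - w - S) - H j.castSucc t * P j t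
        - H j.castSucc t * Z t
        = H j.castSucc t * (r j.castSucc - w - S - P j t - Z t) := by ring
    rw [← heq]; exact hH j
  have h2 : HasDerivAt (fun s => ktwPhi (H (Fin.last m) s) (Hs (Fin.last m)))
      ((H (Fin.last m) t - Hs (Fin.last m)) * (r (Fin.last m) - w - S - Z t)) t := by
    apply hasDerivAt_ktwPhi_mul ?_ (hxpos _)
    have heq : H (Fin.last m) t * (r (Fin.last m) - w - S) - H (Fin.last m) t * Z t
        = H (Fin.last m) t * (r (Fin.last m) - w - S - Z t) := by ring
    rw [← heq]; exact hHn
  have h3 : ∀ j : Fin m, HasDerivAt (fun s => (ν j)⁻¹ * ktwPhi (P j s) (Ps j))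
      ((ν j)⁻¹ * ((P j t - Ps j) * (ν j * (H j.castSucc t - e j)))) t := by
    intro j
    apply HasDerivAt.const_mul
    apply hasDerivAt_ktwPhi_mul ?_ (hppos _)
    have heq : ν j * P j t * (H j.castSucc t - e j)
        = P j t * (ν j * (H j.castSucc t - e j)) := by ring
    rw [← heq]; exact hP j
  have h4 : HasDerivAt (fun s => lam⁻¹ * ktwPhi (Z s) Zs)
      (lam⁻¹ * ((Z t - Zs) * (lam * (S - q)))) t := by
    apply HasDerivAt.const_mul
    apply hasDerivAt_ktwPhi_mul ?_ hzpos
    have heq : lam * Z t * (S - q) = Z t * (lam * (S - q)) := by ring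
    rw [← heq]; exact hZ
  -- assemble
  have hsum1 : HasDerivAt (fun s => ∑ j : Fin m, ktwPhi (H j.castSucc s) (Hs j.castSucc))
      (∑ j : Fin m, (H j.castSucc t - Hs j.castSucc) * (r j.castSucc - w - S - P j t - Z t)) t :=
    HasDerivAt.fun_sum (fun j _ => h1 j)
  have hsum3 : HasDerivAt (fun s => ∑ j : Fin m, (ν j)⁻¹ * ktwPhi (P j s) (Ps j))
      (∑ j : Fin m, (ν j)⁻¹ * ((P j t - Ps j) * (ν j * (H j.castSucc t - e j)))) t :=
    HasDerivAt.fun_sum (fun j _ => h3 j)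
  have htotal := ((hsum1.add h2).add hsum3).add h4
  have hfun : (fun s => ∑ i, ktwPhi (H i s) (Hs i)
        + ∑ j, (ν j)⁻¹ * ktwPhi (P j s) (Ps j) + lam⁻¹ * ktwPhi (Z s) Zs)
      = (fun s => ((∑ j : Fin m, ktwPhi (H j.castSucc s) (Hs j.castSucc)
          + ktwPhi (H (Fin.last m) s) (Hs (Fin.last m)))
        + ∑ j : Fin m, (ν j)⁻¹ * ktwPhi (P j s) (Ps j)) + lam⁻¹ * ktwPhi (Z s) Zs) := by
    funext s; rw [Fin.sum_univ_castSucc]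
  rw [hfun]
  -- now identify the derivative value
  refine htotal.congr_deriv ?_
  symm
  -- algebra
  have hν' : ∀ j : Fin m, (ν j : ℝ) ≠ 0 := fun j => ne_of_gt (hν j)
  have e1 : ∀ j : Fin m, (H j.castSucc t - Hs j.castSucc) * (r j.castSucc - w - S - P j t - Z t)
      + (ν j)⁻¹ * ((P j t - Ps j) * (ν j * (H j.castSucc t - e j)))
      = (H j.castSucc t - e j) * (r (Fin.last m) - w - S - Z t) := by
    intro j
    have hc : (ν j)⁻¹ * ((P j t - Ps j) * (ν j * (H j.castSucc t - e j)))
        = (P j t - Ps j) * (H j.castSucc t - e j) := by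
      calc (ν j)⁻¹ * ((P j t - Ps j) * (ν j * (H j.castSucc t - e j)))
          = ((ν j)⁻¹ * ν j) * ((P j t - Ps j) * (H j.castSucc t - e j)) := by ring
        _ = (P j t - Ps j) * (H j.castSucc t - e j) := by
            rw [inv_mul_cancel₀ (hν' j), one_mul]
    rw [hc, hHse j, hPse j]
    ring
  have hsplit : ∑ j : Fin m, (H j.castSucc t - Hs j.castSucc) * (r j.castSucc - w - S - P j t - Z t)
      + ∑ j : Fin m, (ν j)⁻¹ * ((P j t - Ps j) * (ν j * (H j.castSucc t - e j)))
      = ∑ j : Fin m, (H j.castSucc t - e j) * (r (Fin.last m) - w - S - Z t) := by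
    rw [← Finset.sum_add_distrib]
    exact Finset.sum_congr rfl (fun j _ => e1 j)
  have hsum_he : ∑ j : Fin m, (H j.castSucc t - e j) * (r (Fin.last m) - w - S - Z t)
      = ((∑ j : Fin m, H j.castSucc t) - ∑ j, e j) * (r (Fin.last m) - w - S - Z t) := by
    rw [← Finset.sum_mul, Finset.sum_sub_distrib]
  have hScast : S = (∑ j : Fin m, H j.castSucc t) + H (Fin.last m) t := by
    rw [hS, Fin.sum_univ_castSucc]
  have h4' : lam⁻¹ * ((Z t - Zs) * (lam * (S - q))) = (Z t - Zs) * (S - q) := by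
    calc lam⁻¹ * ((Z t - Zs) * (lam * (S - q)))
        = (lam⁻¹ * lam) * ((Z t - Zs) * (S - q)) := by ring
      _ = (Z t - Zs) * (S - q) := by rw [inv_mul_cancel₀ (ne_of_gt hlam), one_mul]
  set Sm : ℝ := ∑ j : Fin m, H j.castSucc t
  set Es : ℝ := ∑ j, e j
  have goal_eq : (Sm - Es) * (r (Fin.last m) - w - S - Z t)
      + (H (Fin.last m) t - Hs (Fin.last m)) * (r (Fin.last m) - w - S - Z t)
      + (Z t - Zs) * (S - q) = -(S - q)^2 := by
    rw [hHsl, hZse, hScast]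
    ring
  calc -(S - q)^2
      = (Sm - Es) * (r (Fin.last m) - w - S - Z t)
        + (H (Fin.last m) t - Hs (Fin.last m)) * (r (Fin.last m) - w - S - Z t)
        + (Z t - Zs) * (S - q) := goal_eq.symm
    _ = ((∑ j : Fin m, (H j.castSucc t - Hs j.castSucc) * (r j.castSucc - w - S - P j t - Z t)
          + (H (Fin.last m) t - Hs (Fin.last m)) * (r (Fin.last m) - w - S - Z t))
          + ∑ j : Fin m, (ν j)⁻¹ * ((P j t - Ps j) * (ν j * (H j.castSucc t - e j))))
          + lam⁻¹ * ((Z t - Zs) * (lam * (S - q))) := by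
        rw [h4']
        have : (∑ j : Fin m, (H j.castSucc t - Hs j.castSucc) * (r j.castSucc - w - S - P j t - Z t)
            + (H (Fin.last m) t - Hs (Fin.last m)) * (r (Fin.last m) - w - S - Z t))
            + ∑ j : Fin m, (ν j)⁻¹ * ((P j t - Ps j) * (ν j * (H j.castSucc t - e j)))
            = (Sm - Es) * (r (Fin.last m) - w - S - Z t)
              + (H (Fin.last m) t - Hs (Fin.last m)) * (r (Fin.last m) - w - S - Z t) := by
          have := hsplit
          rw [hsum_he] at this
          linarith [this]
        rw [this]
  done

theorem ktw_nonconvergent_omega_limit_planar_volterra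
    (m : ℕ) (hm : 0 < m) (r : Fin (m+1) → ℝ) (w : ℝ) (ν e : Fin m → ℝ) (lam q : ℝ)
    (hr : ∀ i, 0 < r i) (hw : 0 < w) (hν : ∀ i, 0 < ν i) (he : ∀ i, 0 < e i)
    (hlam : 0 < lam) (hq : 0 < q)
    -- existence conditions for the positive equilibrium
    (hc1 : w < r (Fin.last m)) (hc2 : ∀ i : Fin m, r (Fin.last m) < r i.castSucc)
    (hc3 : ∑ i, e i < q) (hc4 : q < r (Fin.last m) - w)
    -- the positive equilibrium
    (Hs : Fin (m+1) → ℝ) (Ps : Fin m → ℝ) (Zs : ℝ)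
    (hHse : ∀ i : Fin m, Hs i.castSucc = e i) (hHsl : Hs (Fin.last m) = q - ∑ i, e i)
    (hPse : ∀ i : Fin m, Ps i = r i.castSucc - r (Fin.last m))
    (hZse : Zs = r (Fin.last m) - w - q)
    -- a positive solution on [0,∞)
    (H : Fin (m+1) → ℝ → ℝ) (P : Fin m → ℝ → ℝ) (Z : ℝ → ℝ)
    (hH : ∀ i : Fin m, ∀ t ∈ Set.Ici (0:ℝ), HasDerivAt (H i.castSucc)
      (H i.castSucc t * (r i.castSucc - w - ∑ j, H j t)
        - H i.castSucc t * P i t - H i.castSucc t * Z t) t)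
    (hHn : ∀ t ∈ Set.Ici (0:ℝ), HasDerivAt (H (Fin.last m))
      (H (Fin.last m) t * (r (Fin.last m) - w - ∑ j, H j t) - H (Fin.last m) t * Z t) t)
    (hPode : ∀ i : Fin m, ∀ t ∈ Set.Ici (0:ℝ), HasDerivAt (P i)
      (ν i * P i t * (H i.castSucc t - e i)) t)
    (hZode : ∀ t ∈ Set.Ici (0:ℝ), HasDerivAt Z (lam * Z t * (∑ j, H j t - q)) t)
    (hpos : ∀ t ∈ Set.Ici (0:ℝ), (∀ i, 0 < H i t) ∧ (∀ j, 0 < P j t) ∧ 0 < Z t)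
    -- an entire trajectory of the system lying in the omega limit set of the above solution
    (Ht : Fin (m+1) → ℝ → ℝ) (Pt : Fin m → ℝ → ℝ) (Zt : ℝ → ℝ)
    (hHt : ∀ i : Fin m, ∀ t : ℝ, HasDerivAt (Ht i.castSucc)
      (Ht i.castSucc t * (r i.castSucc - w - ∑ j, Ht j t)
        - Ht i.castSucc t * Pt i t - Ht i.castSucc t * Zt t) t)
    (hHtn : ∀ t : ℝ, HasDerivAt (Ht (Fin.last m))
      (Ht (Fin.last m) t * (r (Fin.last m) - w - ∑ j, Ht j t) - Ht (Fin.last m) t * Zt t) t)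
    (hPt : ∀ i : Fin m, ∀ t : ℝ, HasDerivAt (Pt i)
      (ν i * Pt i t * (Ht i.castSucc t - e i)) t)
    (hZt : ∀ t : ℝ, HasDerivAt Zt (lam * Zt t * (∑ j, Ht j t - q)) t)
    (hlimit : ∀ t : ℝ, MapClusterPt
      ((fun i => Ht i t, fun j => Pt j t, Zt t) : (Fin (m+1) → ℝ) × (Fin m → ℝ) × ℝ)
      Filter.atTop (fun s => (fun i => H i s, fun j => P j s, Z s)))
    -- the solution does not converge to the positive equilibrium
    (hnconv : ¬ Filter.Tendsto
      (fun s => ((fun i => H i s, fun j => P j s, Z s) : (Fin (m+1) → ℝ) × (Fin m → ℝ) × ℝ))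
      Filter.atTop (nhds (Hs, Ps, Zs))) :
    ∀ t : ℝ,
      Ht (Fin.last m) t = Hs (Fin.last m) ∧
      Zt t = Zs ∧
      (∑ i, Ht i t) = (∑ i, Hs i) ∧
      (∀ i : Fin m,
        HasDerivAt (Ht i.castSucc) (Ht i.castSucc t * (Ps i - Pt i t)) t ∧
        HasDerivAt (Pt i) (ν i * Pt i t * (Ht i.castSucc t - Hs i.castSucc)) t) := by
  classical
  -- positivity of the equilibrium
  have hHspos : ∀ i, 0 < Hs i := by
    intro i
    induction i using Fin.lastCases with
    | last => rw [hHsl]; linarith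
    | cast j => rw [hHse j]; exact he j
  have hPspos : ∀ j, 0 < Ps j := fun j => by rw [hPse j]; linarith [hc2 j]
  have hZspos : 0 < Zs := by rw [hZse]; linarith
  -- the Lyapunov function along the solution
  set v : ℝ → ℝ := fun s => ∑ i, ktwPhi (H i s) (Hs i)
      + ∑ j, (ν j)⁻¹ * ktwPhi (P j s) (Ps j) + lam⁻¹ * ktwPhi (Z s) Zs with hvdef
  have hvderiv : ∀ s ∈ Set.Ici (0:ℝ), HasDerivAt v (-(∑ j, H j s - q)^2) s := by
    intro s hs
    exact hasDerivAt_lyap m r w q lam ν e Hs Ps Zs hHse hHsl hPse hZse hν hlam H P Z s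
      (fun i => hH i s hs) (hHn s hs) (fun i => hPode i s hs) (hZode s hs)
      (fun i => (hpos s hs).1 i) (hpos s hs).2.1 (hpos s hs).2.2
  have hvanti : AntitoneOn v (Set.Ici (0:ℝ)) := by
    apply antitoneOn_of_deriv_nonpos (convex_Ici 0)
    · intro s hs
      exact (hvderiv s hs).differentiableAt.continuousAt.continuousWithinAt
    · intro s hs
      rw [interior_Ici] at hs
      exact (hvderiv s (Set.Ioi_subset_Ici_self hs)).differentiableAt.differentiableWithinAt
    · intro s hs
      rw [interior_Ici] at hs
      rw [(hvderiv s (Set.Ioi_subset_Ici_self hs)).deriv]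
      exact neg_nonpos.mpr (sq_nonneg _)
  -- lower bounds for each Lyapunov block
  set MH : ℝ := ∑ i, ktwPhi (Hs i) (Hs i) with hMH
  set MP : ℝ := ∑ j, (ν j)⁻¹ * ktwPhi (Ps j) (Ps j) with hMP
  set MZ : ℝ := lam⁻¹ * ktwPhi Zs Zs with hMZ
  have hblockH : ∀ s ∈ Set.Ici (0:ℝ), MH ≤ ∑ i, ktwPhi (H i s) (Hs i) :=
    fun s hs => Finset.sum_le_sum fun i _ => ktwPhi_ge (hHspos i) ((hpos s hs).1 i)
  have hblockP : ∀ s ∈ Set.Ici (0:ℝ), MP ≤ ∑ j, (ν j)⁻¹ * ktwPhi (P j s) (Ps j) :=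
    fun s hs => Finset.sum_le_sum fun j _ => mul_le_mul_of_nonneg_left
      (ktwPhi_ge (hPspos j) ((hpos s hs).2.1 j)) (inv_nonneg.mpr (hν j).le)
  have hblockZ : ∀ s ∈ Set.Ici (0:ℝ), MZ ≤ lam⁻¹ * ktwPhi (Z s) Zs :=
    fun s hs => mul_le_mul_of_nonneg_left
      (ktwPhi_ge hZspos (hpos s hs).2.2) (inv_nonneg.mpr hlam.le)
  set B : ℝ := v 0 with hB
  have hvB : ∀ s ∈ Set.Ici (0:ℝ), v s ≤ B :=
    fun s hs => hvanti Set.self_mem_Ici hs hs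
  -- uniform per-coordinate bounds along the solution
  set KH : Fin (m+1) → ℝ := fun i => (B - MP - MZ) - MH + ktwPhi (Hs i) (Hs i) with hKHdef
  have hKH : ∀ s ∈ Set.Ici (0:ℝ), ∀ i, ktwPhi (H i s) (Hs i) ≤ KH i := by
    intro s hs
    have hsum : ∑ i, ktwPhi (H i s) (Hs i) ≤ B - MP - MZ := by
      have h1 := hvB s hs
      have h2 := hblockP s hs
      have h3 := hblockZ s hs
      rw [hvdef] at h1
      simp only at h1
      have h4 : (∑ i, ktwPhi (H i s) (Hs i)) + MP + MZ ≤ B :=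
        le_trans (add_le_add (add_le_add le_rfl h2) h3) h1
      linarith [h4]
    intro i
    exact sum_single_le (fun i => ktwPhi_ge (hHspos i) ((hpos s hs).1 i)) hsum i
  set KP : Fin m → ℝ := fun j => ν j * ((B - MH - MZ) - MP + (ν j)⁻¹ * ktwPhi (Ps j) (Ps j))
    with hKPdef
  have hKP : ∀ s ∈ Set.Ici (0:ℝ), ∀ j, ktwPhi (P j s) (Ps j) ≤ KP j := by
    intro s hs j
    have hsum : ∑ j, (ν j)⁻¹ * ktwPhi (P j s) (Ps j) ≤ B - MH - MZ := by
      have h1 := hvB s hs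
      have h2 := hblockH s hs
      have h3 := hblockZ s hs
      rw [hvdef] at h1
      simp only at h1
      linarith
    have h4 := sum_single_le (fun j => mul_le_mul_of_nonneg_left
      (ktwPhi_ge (hPspos j) ((hpos s hs).2.1 j)) (inv_nonneg.mpr (hν j).le)) hsum j
    have h5 : ktwPhi (P j s) (Ps j) = ν j * ((ν j)⁻¹ * ktwPhi (P j s) (Ps j)) := by
      rw [← mul_assoc, mul_inv_cancel₀ (ne_of_gt (hν j)), one_mul]
    rw [h5, hKPdef]
    exact mul_le_mul_of_nonneg_left h4 (hν j).le
  set KZ : ℝ := lam * ((B - MH - MP) - MZ + lam⁻¹ * ktwPhi Zs Zs) with hKZdef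
  have hKZ : ∀ s ∈ Set.Ici (0:ℝ), ktwPhi (Z s) Zs ≤ KZ := by
    intro s hs
    have h1 := hvB s hs
    have h2 := hblockH s hs
    have h3 := hblockP s hs
    rw [hvdef] at h1
    simp only at h1
    have h4 : lam⁻¹ * ktwPhi (Z s) Zs ≤ (B - MH - MP) - MZ + lam⁻¹ * ktwPhi Zs Zs := by
      rw [hMZ]; linarith [ktwPhi_ge hZspos (hpos s hs).2.2]
    have h5 : ktwPhi (Z s) Zs = lam * (lam⁻¹ * ktwPhi (Z s) Zs) := by
      rw [← mul_assoc, mul_inv_cancel₀ (ne_of_gt hlam), one_mul]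
    rw [h5, hKZdef]
    exact mul_le_mul_of_nonneg_left h4 hlam.le
  -- boxes
  set Lh : Fin (m+1) → ℝ := fun i => Real.exp (-(KH i / Hs i)) with hLh
  set Uh : Fin (m+1) → ℝ := fun i => 2 * (KH i - Hs i + Hs i * Real.log (2 * Hs i)) with hUh
  set Lp : Fin m → ℝ := fun j => Real.exp (-(KP j / Ps j)) with hLp
  set Up : Fin m → ℝ := fun j => 2 * (KP j - Ps j + Ps j * Real.log (2 * Ps j)) with hUp
  set Lz : ℝ := Real.exp (-(KZ / Zs)) with hLz
  set Uz : ℝ := 2 * (KZ - Zs + Zs * Real.log (2 * Zs)) with hUz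
  have hboxH : ∀ s ∈ Set.Ici (0:ℝ), ∀ i, H i s ∈ Set.Icc (Lh i) (Uh i) := by
    intro s hs i
    have hp := (hpos s hs).1 i
    constructor
    · have := ktwPhi_log_lower (hHspos i) hp (hKH s hs i)
      have h2 := Real.exp_le_exp.mpr this
      rwa [Real.exp_log hp] at h2
    · exact ktwPhi_upper (hHspos i) hp (hKH s hs i)
  have hboxP : ∀ s ∈ Set.Ici (0:ℝ), ∀ j, P j s ∈ Set.Icc (Lp j) (Up j) := by
    intro s hs j
    have hp := (hpos s hs).2.1 j
    constructor
    · have := ktwPhi_log_lower (hPspos j) hp (hKP s hs j)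
      have h2 := Real.exp_le_exp.mpr this
      rwa [Real.exp_log hp] at h2
    · exact ktwPhi_upper (hPspos j) hp (hKP s hs j)
  have hboxZ : ∀ s ∈ Set.Ici (0:ℝ), Z s ∈ Set.Icc Lz Uz := by
    intro s hs
    have hp := (hpos s hs).2.2
    constructor
    · have := ktwPhi_log_lower hZspos hp (hKZ s hs)
      have h2 := Real.exp_le_exp.mpr this
      rwa [Real.exp_log hp] at h2
    · exact ktwPhi_upper hZspos hp (hKZ s hs)
  -- the limit trajectory lies in the boxes
  have htbH : ∀ t i, Ht i t ∈ Set.Icc (Lh i) (Uh i) := by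
    intro t i
    have hcl : MapClusterPt (Ht i t) Filter.atTop (fun s => H i s) := by
      have := mapClusterPt_comp_contAt (hlimit t)
        (f := fun y : (Fin (m+1) → ℝ) × (Fin m → ℝ) × ℝ => y.1 i)
        (((continuous_apply i).comp continuous_fst).continuousAt)
      exact this
    exact mapClusterPt_mem_closed hcl
      (Filter.eventually_atTop.mpr ⟨0, fun s hs => hboxH s hs i⟩) isClosed_Icc
  have htbP : ∀ t j, Pt j t ∈ Set.Icc (Lp j) (Up j) := by
    intro t j
    have hcl : MapClusterPt (Pt j t) Filter.atTop (fun s => P j s) := by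
      have := mapClusterPt_comp_contAt (hlimit t)
        (f := fun y : (Fin (m+1) → ℝ) × (Fin m → ℝ) × ℝ => y.2.1 j)
        (((continuous_apply j).comp (continuous_fst.comp continuous_snd)).continuousAt)
      exact this
    exact mapClusterPt_mem_closed hcl
      (Filter.eventually_atTop.mpr ⟨0, fun s hs => hboxP s hs j⟩) isClosed_Icc
  have htbZ : ∀ t, Zt t ∈ Set.Icc Lz Uz := by
    intro t
    have hcl : MapClusterPt (Zt t) Filter.atTop (fun s => Z s) := by
      have := mapClusterPt_comp_contAt (hlimit t)
        (f := fun y : (Fin (m+1) → ℝ) × (Fin m → ℝ) × ℝ => y.2.2)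
        ((continuous_snd.comp continuous_snd).continuousAt)
      exact this
    exact mapClusterPt_mem_closed hcl
      (Filter.eventually_atTop.mpr ⟨0, fun s hs => hboxZ s hs⟩) isClosed_Icc
  have hHtpos : ∀ i t, 0 < Ht i t := fun i t => lt_of_lt_of_le (Real.exp_pos _) (htbH t i).1
  have hPtpos : ∀ j t, 0 < Pt j t := fun j t => lt_of_lt_of_le (Real.exp_pos _) (htbP t j).1
  have hZtpos : ∀ t, 0 < Zt t := fun t => lt_of_lt_of_le (Real.exp_pos _) (htbZ t).1
  -- the limit of the Lyapunov function
  have hbdd : BddBelow (v '' Set.Ici (0:ℝ)) := by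
    refine ⟨MH + MP + MZ, ?_⟩
    rintro x ⟨s, hs, rfl⟩
    have h1 := hblockH s hs
    have h2 := hblockP s hs
    have h3 := hblockZ s hs
    rw [hvdef]
    simp only
    linarith
  set c : ℝ := sInf (v '' Set.Ici (0:ℝ)) with hc
  have hvc : Filter.Tendsto v Filter.atTop (nhds c) := by
    rw [Metric.tendsto_atTop]
    intro ε hε
    have hne : (v '' Set.Ici (0:ℝ)).Nonempty := ⟨v 0, ⟨0, Set.self_mem_Ici, rfl⟩⟩
    obtain ⟨x, ⟨s₀, hs₀, rfl⟩, hx⟩ := exists_lt_of_csInf_lt hne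
      (show sInf (v '' Set.Ici (0:ℝ)) < c + ε by rw [← hc]; linarith)
    refine ⟨s₀, fun s hs => ?_⟩
    have hs0 : s ∈ Set.Ici (0:ℝ) := le_trans hs₀ hs
    have hle : v s ≤ v s₀ := hvanti hs₀ hs0 hs
    have hge : c ≤ v s := csInf_le hbdd ⟨s, hs0, rfl⟩
    rw [Real.dist_eq, abs_lt]
    constructor <;> linarith
  -- the Lyapunov function is constant (= c) along the limit trajectory
  set vt : ℝ → ℝ := fun τ => ∑ i, ktwPhi (Ht i τ) (Hs i)
      + ∑ j, (ν j)⁻¹ * ktwPhi (Pt j τ) (Ps j) + lam⁻¹ * ktwPhi (Zt τ) Zs with hvtdef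
  have hvtc : ∀ τ, vt τ = c := by
    intro τ
    set Vfn : (Fin (m+1) → ℝ) × (Fin m → ℝ) × ℝ → ℝ := fun y =>
      ∑ i, ktwPhi (y.1 i) (Hs i) + ∑ j, (ν j)⁻¹ * ktwPhi (y.2.1 j) (Ps j)
        + lam⁻¹ * ktwPhi y.2.2 Zs with hVfn
    have hφ : ∀ a x0 : ℝ, x0 ≠ 0 → ContinuousAt (fun x => ktwPhi x a) x0 := by
      intro a x0 hx0
      unfold ktwPhi
      exact continuousAt_id.sub (continuousAt_const.mul (Real.continuousAt_log hx0))
    have hcont : ContinuousAt Vfn (fun i => Ht i τ, fun j => Pt j τ, Zt τ) := by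
      apply ContinuousAt.add
      apply ContinuousAt.add
      · apply tendsto_finset_sum
        intro i _
        have hproj : ContinuousAt
            (fun y : (Fin (m+1) → ℝ) × (Fin m → ℝ) × ℝ => y.1 i)
            (fun i => Ht i τ, fun j => Pt j τ, Zt τ) := by
          exact ((continuous_apply i).comp continuous_fst).continuousAt
        exact ContinuousAt.comp (g := fun x => ktwPhi x (Hs i))
          (f := fun y : (Fin (m+1) → ℝ) × (Fin m → ℝ) × ℝ => y.1 i)
          (by exact hφ (Hs i) (Ht i τ) (ne_of_gt (hHtpos i τ))) hproj
      · apply tendsto_finset_sum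
        intro j _
        have hproj : ContinuousAt
            (fun y : (Fin (m+1) → ℝ) × (Fin m → ℝ) × ℝ => y.2.1 j)
            (fun i => Ht i τ, fun j => Pt j τ, Zt τ) := by
          exact ((continuous_apply j).comp (continuous_fst.comp continuous_snd)).continuousAt
        exact continuousAt_const.mul
          (ContinuousAt.comp (g := fun x => ktwPhi x (Ps j))
            (f := fun y : (Fin (m+1) → ℝ) × (Fin m → ℝ) × ℝ => y.2.1 j)
            (by exact hφ (Ps j) (Pt j τ) (ne_of_gt (hPtpos j τ))) hproj)
      · have hproj : ContinuousAt
            (fun y : (Fin (m+1) → ℝ) × (Fin m → ℝ) × ℝ => y.2.2)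
            (fun i => Ht i τ, fun j => Pt j τ, Zt τ) := by
          exact (continuous_snd.comp continuous_snd).continuousAt
        exact continuousAt_const.mul
          (ContinuousAt.comp (g := fun x => ktwPhi x Zs)
            (f := fun y : (Fin (m+1) → ℝ) × (Fin m → ℝ) × ℝ => y.2.2)
            (by exact hφ Zs (Zt τ) (ne_of_gt (hZtpos τ))) hproj)
    have hclV : MapClusterPt (Vfn (fun i => Ht i τ, fun j => Pt j τ, Zt τ)) Filter.atTop
        (fun s => Vfn (fun i => H i s, fun j => P j s, Z s)) :=
      mapClusterPt_comp_contAt (hlimit τ) hcont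
    have : Filter.Tendsto (fun s => Vfn (fun i => H i s, fun j => P j s, Z s))
        Filter.atTop (nhds c) := hvc
    exact mapClusterPt_eq_of_tendsto hclV this
  -- derivative of the Lyapunov function along the trajectory, hence the sum is ≡ q
  have hvtderiv : ∀ τ, HasDerivAt vt (-(∑ j, Ht j τ - q)^2) τ := by
    intro τ
    exact hasDerivAt_lyap m r w q lam ν e Hs Ps Zs hHse hHsl hPse hZse hν hlam Ht Pt Zt τ
      (fun i => hHt i τ) (hHtn τ) (fun i => hPt i τ) (hZt τ)
      (fun i => hHtpos i τ) (fun j => hPtpos j τ) (hZtpos τ)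
  have hSq : ∀ τ, ∑ j, Ht j τ = q := by
    intro τ
    have h0 : HasDerivAt vt 0 τ := by
      have hfe : vt = fun _ => c := funext hvtc
      rw [hfe]
      exact hasDerivAt_const τ c
    have h1 := (hvtderiv τ).unique h0
    have h2 : (∑ j, Ht j τ - q)^2 = 0 := by linarith
    have h3 := (pow_eq_zero_iff (two_ne_zero (α := ℕ))).mp h2
    linarith
  -- Z is constant along the trajectory
  have hZt0 : ∀ τ, HasDerivAt Zt 0 τ := by
    intro τ
    have h1 := hZt τ
    rw [hSq τ, sub_self, mul_zero] at h1
    exact h1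
  have hZconst : ∀ τ, Zt τ = Zt 0 :=
    fun τ => is_const_of_deriv_eq_zero (fun x => (hZt0 x).differentiableAt)
      (fun x => (hZt0 x).deriv) τ 0
  -- log Hₙ is affine and bounded, so Zt ≡ Zs
  have hlogd : ∀ τ, HasDerivAt (fun s => Real.log (Ht (Fin.last m) s)) (Zs - Zt 0) τ := by
    intro τ
    have h1 := hHtn τ
    rw [hSq τ, hZconst τ] at h1
    have h2 : Ht (Fin.last m) τ * (r (Fin.last m) - w - q) - Ht (Fin.last m) τ * Zt 0
        = Ht (Fin.last m) τ * (r (Fin.last m) - w - q - Zt 0) := by ring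
    rw [h2] at h1
    have h3 := h1.log (ne_of_gt (hHtpos _ τ))
    rw [mul_div_cancel_left₀ _ (ne_of_gt (hHtpos _ τ))] at h3
    have h4 : r (Fin.last m) - w - q - Zt 0 = Zs - Zt 0 := by rw [hZse]
    rwa [h4] at h3
  have hZ0s : Zt 0 = Zs := by
    have haff := affine_of_hasDerivAt hlogd
    have hbnd : ∀ τ, |Real.log (Ht (Fin.last m) τ)|
        ≤ max |Real.log (Lh (Fin.last m))| |Real.log (Uh (Fin.last m))| := fun τ =>
      abs_log_le_of_mem (Real.exp_pos _) (htbH τ _).1 (htbH τ _).2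
    have := const_of_bounded_affine hbnd haff
    linarith
  have hZeq : ∀ τ, Zt τ = Zs := fun τ => by rw [hZconst τ, hZ0s]
  -- Hₙ is constant along the trajectory
  have hHn0 : ∀ τ, HasDerivAt (Ht (Fin.last m)) 0 τ := by
    intro τ
    have h1 := hHtn τ
    rw [hSq τ, hZeq τ, hZse, sub_self] at h1
    exact h1
  have hHnconst : ∀ τ, Ht (Fin.last m) τ = Ht (Fin.last m) 0 :=
    fun τ => is_const_of_deriv_eq_zero (fun x => (hHn0 x).differentiableAt)
      (fun x => (hHn0 x).deriv) τ 0
  -- the averaging argument: the weighted sum of log Pⱼ is affine and bounded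
  have hGd : ∀ τ, HasDerivAt (fun s => ∑ j, (ν j)⁻¹ * Real.log (Pt j s))
      (q - Ht (Fin.last m) 0 - ∑ j, e j) τ := by
    intro τ
    have hterm : ∀ j : Fin m, HasDerivAt (fun s => (ν j)⁻¹ * Real.log (Pt j s))
        (Ht j.castSucc τ - e j) τ := by
      intro j
      have h1 := (hPt j τ).log (ne_of_gt (hPtpos j τ))
      have h2 := h1.const_mul (ν j)⁻¹
      have h3 : (ν j)⁻¹ * (ν j * Pt j τ * (Ht j.castSucc τ - e j) / Pt j τ)
          = Ht j.castSucc τ - e j := by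
        have e1 : ν j * Pt j τ * (Ht j.castSucc τ - e j) / Pt j τ
            = ν j * (Ht j.castSucc τ - e j) := by
          rw [mul_comm (ν j) (Pt j τ), mul_assoc,
            mul_div_cancel_left₀ _ (ne_of_gt (hPtpos j τ))]
        rw [e1, ← mul_assoc, inv_mul_cancel₀ (ne_of_gt (hν j)), one_mul]
      rw [h3] at h2
      exact h2
    have hsum := HasDerivAt.fun_sum (fun j (_ : j ∈ Finset.univ) => hterm j)
    have heq : ∑ j : Fin m, (Ht j.castSucc τ - e j)
        = q - Ht (Fin.last m) 0 - ∑ j, e j := by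
      rw [Finset.sum_sub_distrib]
      have h4 : ∑ j : Fin m, Ht j.castSucc τ = q - Ht (Fin.last m) τ := by
        have h5 := hSq τ
        rw [Fin.sum_univ_castSucc] at h5
        linarith
      rw [h4, hHnconst τ]
    rw [heq] at hsum
    exact hsum
  have hHn0val : Ht (Fin.last m) 0 = q - ∑ j, e j := by
    have haff := affine_of_hasDerivAt hGd
    have hbnd : ∀ τ, |∑ j, (ν j)⁻¹ * Real.log (Pt j τ)|
        ≤ ∑ j, (ν j)⁻¹ * max |Real.log (Lp j)| |Real.log (Up j)| := by
      intro τ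
      refine le_trans (Finset.abs_sum_le_sum_abs _ _) (Finset.sum_le_sum fun j _ => ?_)
      rw [abs_mul, abs_of_nonneg (inv_nonneg.mpr (hν j).le)]
      exact mul_le_mul_of_nonneg_left
        (abs_log_le_of_mem (Real.exp_pos _) (htbP τ j).1 (htbP τ j).2)
        (inv_nonneg.mpr (hν j).le)
    have := const_of_bounded_affine hbnd haff
    linarith
  -- conclusions
  intro t
  have hHnt : Ht (Fin.last m) t = Hs (Fin.last m) := by
    rw [hHnconst t, hHn0val, hHsl]
  refine ⟨hHnt, hZeq t, ?_, fun i => ⟨?_, ?_⟩⟩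
  · rw [hSq t]
    have h1 : ∑ i, Hs i = q := by
      rw [Fin.sum_univ_castSucc, hHsl]
      have h2 : ∑ j : Fin m, Hs j.castSucc = ∑ j, e j :=
        Finset.sum_congr rfl fun j _ => hHse j
      rw [h2]; ring
    rw [h1]
  · have h1 := hHt i t
    rw [hSq t, hZeq t] at h1
    have h2 : Ht i.castSucc t * (r i.castSucc - w - q) - Ht i.castSucc t * Pt i t
        - Ht i.castSucc t * Zs = Ht i.castSucc t * (Ps i - Pt i t) := by
      rw [hPse i, hZse]; ring
    rw [h2] at h1
    exact h1
  · rw [hHse i]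
    exact hPt i t
end

section
/- For every positive solution of the scaled KtW system, H_n(t) → H_n* and Z(t) → Z* as t → ∞. -/
open Set Filter



/-- f' ≤ 0 on [a,b] implies f b ≤ f a. -/
lemma ktw_anti {f f' : ℝ → ℝ} {a b : ℝ} (hab : a ≤ b)
    (hf : ∀ t ∈ Set.Icc a b, HasDerivAt f (f' t) t)
    (h0 : ∀ t ∈ Set.Icc a b, f' t ≤ 0) : f b ≤ f a := by
  have hA : AntitoneOn f (Set.Icc a b) := by
    apply antitoneOn_of_deriv_nonpos (convex_Icc a b)
    · intro t ht; exact (hf t ht).continuousAt.continuousWithinAt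
    · intro t ht
      rw [interior_Icc] at ht
      exact ((hf t (Ioo_subset_Icc_self ht)).differentiableAt).differentiableWithinAt
    · intro t ht
      rw [interior_Icc] at ht
      rw [(hf t (Ioo_subset_Icc_self ht)).deriv]
      exact h0 t (Ioo_subset_Icc_self ht)
  exact hA (Set.left_mem_Icc.2 hab) (Set.right_mem_Icc.2 hab) hab

/-- Lipschitz bound on [a,b] from derivative bound. -/
lemma ktw_lip {f f' : ℝ → ℝ} {a b K : ℝ}
    (hf : ∀ t ∈ Set.Icc a b, HasDerivAt f (f' t) t)
    (hK : ∀ t ∈ Set.Icc a b, |f' t| ≤ K) {x y : ℝ}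
    (hx : x ∈ Set.Icc a b) (hy : y ∈ Set.Icc a b) : |f y - f x| ≤ K * |y - x| := by
  have := Convex.norm_image_sub_le_of_norm_hasDerivWithin_le
    (f := f) (f' := f') (s := Set.Icc a b) (C := K)
    (fun t ht => (hf t ht).hasDerivWithinAt) (fun t ht => hK t ht) (convex_Icc a b) hx hy
  simpa [Real.norm_eq_abs] using this

/-- Core lemma A (slow drift): if f' → 0, g is bounded on [0,∞), and for large t,
f t ≥ ε/2 forces g' t ≤ -c, then eventually f t < ε. -/
lemma ktw_coreA {f g f' g' : ℝ → ℝ} {ε c Cg T₀ : ℝ} (hε : 0 < ε) (hc : 0 < c)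
    (hfd : ∀ t ∈ Set.Ici (0:ℝ), HasDerivAt f (f' t) t)
    (hgd : ∀ t ∈ Set.Ici (0:ℝ), HasDerivAt g (g' t) t)
    (hf' : Filter.Tendsto f' Filter.atTop (nhds 0))
    (hg : ∀ t ∈ Set.Ici (0:ℝ), |g t| ≤ Cg)
    (hkey : ∀ t ≥ T₀, ε/2 ≤ f t → g' t ≤ -c) :
    ∀ᶠ t in Filter.atTop, f t < ε := by
  -- interval length
  set L : ℝ := (2*Cg + 1)/c with hL
  have hCg : 0 ≤ Cg := le_trans (abs_nonneg _) (hg 0 (Set.mem_Ici.2 le_rfl))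
  have hLpos : 0 < L := div_pos (by linarith) hc
  set η : ℝ := (ε/2)/L with hη
  have hηpos : 0 < η := div_pos (by linarith) hLpos
  -- f' eventually small
  obtain ⟨T₁, hT₁⟩ := (Metric.tendsto_atTop.1 hf') η hηpos
  rw [Filter.eventually_atTop]
  refine ⟨max (max T₀ T₁) 0, ?_⟩
  intro t₀ ht₀
  by_contra hcon
  push_neg at hcon
  have ht₀0 : (0:ℝ) ≤ t₀ := le_trans (le_max_right _ _) ht₀
  have ht₀T₀ : T₀ ≤ t₀ := le_trans (le_trans (le_max_left _ _) (le_max_left _ _)) ht₀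
  have ht₀T₁ : T₁ ≤ t₀ := le_trans (le_trans (le_max_right _ _) (le_max_left _ _)) ht₀
  -- on [t₀, t₀ + L], f ≥ ε/2
  have hIcc : Set.Icc t₀ (t₀ + L) ⊆ Set.Ici (0:ℝ) := fun s hs => le_trans ht₀0 hs.1
  have hfband : ∀ s ∈ Set.Icc t₀ (t₀ + L), ε/2 ≤ f s := by
    intro s hs
    have hlip : |f s - f t₀| ≤ η * |s - t₀| :=
      ktw_lip (fun u hu => hfd u (hIcc hu))
        (fun u hu => le_of_lt (by
          have := hT₁ u (le_trans ht₀T₁ hu.1)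
          simpa [Real.dist_eq] using this))
        (Set.left_mem_Icc.2 (by linarith)) hs
    have h1 : |s - t₀| ≤ L := by
      rw [abs_of_nonneg (by linarith [hs.1])]; linarith [hs.2]
    have h2 : |f s - f t₀| ≤ ε/2 := by
      calc |f s - f t₀| ≤ η * |s - t₀| := hlip
        _ ≤ η * L := by nlinarith [abs_nonneg (s - t₀)]
        _ = ε/2 := by rw [hη]; field_simp
    have := abs_le.1 h2
    linarith [hcon]
  -- g decreases by c*L
  have hdrop : g (t₀ + L) ≤ g t₀ - c * L := by
    have := ktw_anti (f := fun s => g s + c * s) (f' := fun s => g' s + c)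
      (a := t₀) (b := t₀ + L) (by linarith)
      (fun s hs => ((hgd s (hIcc hs)).add ((hasDerivAt_id s).const_mul c)).congr_deriv (by ring))
      (fun s hs => by
        have := hkey s (le_trans ht₀T₀ hs.1) (hfband s hs)
        show g' s + c ≤ 0
        linarith)
    linarith
  have h1 := abs_le.1 (hg (t₀ + L) (Set.mem_Ici.2 (by linarith)))
  have h2 := abs_le.1 (hg t₀ ht₀0)
  have : c * L = 2*Cg + 1 := by rw [hL]; field_simp
  linarith [h1.1, h2.2]


/-- Core lemma B (Barbalat type): |f'| ≤ K, g nonincreasing and bounded, and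
f t ≥ ε/2 forces g' t ≤ -c. Then eventually f t < ε. -/
lemma ktw_coreB {f g f' g' : ℝ → ℝ} {ε c K Cg : ℝ} (hε : 0 < ε) (hc : 0 < c) (hK : 0 < K)
    (hfd : ∀ t ∈ Set.Ici (0:ℝ), HasDerivAt f (f' t) t)
    (hgd : ∀ t ∈ Set.Ici (0:ℝ), HasDerivAt g (g' t) t)
    (hf' : ∀ t ∈ Set.Ici (0:ℝ), |f' t| ≤ K)
    (hg0 : ∀ t ∈ Set.Ici (0:ℝ), g' t ≤ 0)
    (hg : ∀ t ∈ Set.Ici (0:ℝ), |g t| ≤ Cg)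
    (hkey : ∀ t ∈ Set.Ici (0:ℝ), ε/2 ≤ f t → g' t ≤ -c) :
    ∀ᶠ t in Filter.atTop, f t < ε := by
  set L : ℝ := ε/(2*K) with hLdef
  have hLpos : 0 < L := div_pos hε (by linarith)
  by_contra hcon
  rw [Filter.not_eventually] at hcon
  have hfreq : ∀ T : ℝ, ∃ t, max T 0 ≤ t ∧ ε ≤ f t := by
    intro T
    obtain ⟨t, ht1, ht2⟩ := (Filter.frequently_atTop.1 hcon) (max T 0)
    exact ⟨t, ht1, not_lt.1 ht2⟩
  -- recursively chosen times
  choose F hF1 hF2 using hfreq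
  let tseq : ℕ → ℝ := fun k => Nat.rec (F 0) (fun _ prev => F (prev + L)) k
  have htpos : ∀ k, 0 ≤ tseq k := by
    intro k
    cases k with
    | zero => exact le_trans (le_max_right 0 0) (hF1 0)
    | succ k => exact le_trans (le_max_right _ 0) (hF1 _)
  have htf : ∀ k, ε ≤ f (tseq k) := by
    intro k; cases k with
    | zero => exact hF2 0
    | succ k => exact hF2 _
  have htstep : ∀ k, tseq k + L ≤ tseq (k+1) := by
    intro k; exact le_trans (le_max_left _ 0) (hF1 (tseq k + L))
  -- f ≥ ε/2 on [t_k, t_k + L]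
  have hband : ∀ k, ∀ s ∈ Set.Icc (tseq k) (tseq k + L), ε/2 ≤ f s := by
    intro k s hs
    have hsub : Set.Icc (tseq k) (tseq k + L) ⊆ Set.Ici (0:ℝ) :=
      fun u hu => le_trans (htpos k) hu.1
    have hlip : |f s - f (tseq k)| ≤ K * |s - tseq k| :=
      ktw_lip (fun u hu => hfd u (hsub hu)) (fun u hu => hf' u (hsub hu))
        (Set.left_mem_Icc.2 (by linarith)) hs
    have h1 : |s - tseq k| ≤ L := by
      rw [abs_of_nonneg (by linarith [hs.1])]; linarith [hs.2]
    have h2 : |f s - f (tseq k)| ≤ ε/2 := by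
      calc |f s - f (tseq k)| ≤ K * |s - tseq k| := hlip
        _ ≤ K * L := by nlinarith [abs_nonneg (s - tseq k)]
        _ = ε/2 := by rw [hLdef]; field_simp
    have := abs_le.1 h2
    linarith [htf k]
  -- g(t_{k}) ≤ g(t_0) - k * (c*L)
  have hmono : ∀ a b : ℝ, 0 ≤ a → a ≤ b → g b ≤ g a := by
    intro a b ha hab
    exact ktw_anti hab (fun u hu => hgd u (le_trans ha hu.1))
      (fun u hu => hg0 u (le_trans ha hu.1))
  have hdrop : ∀ k, g (tseq k + L) ≤ g (tseq k) - c * L := by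
    intro k
    have hsub : Set.Icc (tseq k) (tseq k + L) ⊆ Set.Ici (0:ℝ) :=
      fun u hu => le_trans (htpos k) hu.1
    have := ktw_anti (f := fun s => g s + c * s) (f' := fun s => g' s + c)
      (a := tseq k) (b := tseq k + L) (by linarith)
      (fun s hs => ((hgd s (hsub hs)).add ((hasDerivAt_id s).const_mul c)).congr_deriv (by ring))
      (fun s hs => by
        have := hkey s (hsub hs) (hband k s hs)
        show g' s + c ≤ 0
        linarith)
    linarith
  have hind : ∀ k, g (tseq k) ≤ g (tseq 0) - k * (c * L) := by
    intro k
    induction k with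
    | zero => simp
    | succ k ih =>
      have h1 : g (tseq (k+1)) ≤ g (tseq k + L) :=
        hmono _ _ (by linarith [htpos k]) (htstep k)
      have h2 := hdrop k
      push_cast
      push_cast at ih
      linarith
  -- contradiction
  have hCg : 0 ≤ Cg := le_trans (abs_nonneg _) (hg 0 (Set.mem_Ici.2 le_rfl))
  obtain ⟨k, hk⟩ := exists_nat_gt ((2*Cg + 1)/(c*L))
  have hcl : 0 < c * L := by positivity
  have h1 := abs_le.1 (hg (tseq k) (htpos k))
  have h2 := abs_le.1 (hg (tseq 0) (htpos 0))
  have h3 := hind k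
  have h4 : (2*Cg + 1) < k * (c * L) := by
    rw [div_lt_iff₀ hcl] at hk; linarith
  linarith [h1.1, h2.2]

/-- φ c x := x - c log x ≥ c - c log c for x > 0. -/
lemma ktw_phi_lower {c x : ℝ} (hc : 0 < c) (hx : 0 < x) :
    c - c * Real.log c ≤ x - c * Real.log x := by
  have h := Real.log_le_sub_one_of_pos (show 0 < x/c by positivity)
  rw [Real.log_div (ne_of_gt hx) (ne_of_gt hc)] at h
  have h2 : c * (Real.log x - Real.log c) ≤ c * (x/c - 1) := mul_le_mul_of_nonneg_left h hc.le
  have h3 : c * (x/c - 1) = x - c := by field_simp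
  nlinarith

/-- upper bound for x from φ c x ≤ B. -/
lemma ktw_phi_upper {c x : ℝ} (hc : 0 < c) (hx : 0 < x) :
    x ≤ 2*(x - c*Real.log x) - 2*c + 2*c*Real.log (2*c) := by
  have h := Real.log_le_sub_one_of_pos (show 0 < x/(2*c) by positivity)
  rw [Real.log_div (ne_of_gt hx) (by positivity)] at h
  have h2 : (2*c) * (Real.log x - Real.log (2*c)) ≤ (2*c) * (x/(2*c) - 1) :=
    mul_le_mul_of_nonneg_left h (by positivity)
  have h3 : (2*c) * (x/(2*c) - 1) = x - 2*c := by field_simp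
  nlinarith

/-- lower bound for log x from φ c x ≤ B. -/
lemma ktw_phi_log_lower {c x : ℝ} (hc : 0 < c) (hx : 0 < x) :
    -((x - c*Real.log x)/c) ≤ Real.log x := by
  have h1 : -((x - c*Real.log x)/c) = Real.log x - x/c := by field_simp; ring
  rw [h1]
  have h2 : 0 ≤ x/c := by positivity
  linarith
lemma ktw_alg1 (x c A B : ℝ) (hx : x ≠ 0) :
    (x*A - x*B) - c*((x*A - x*B)/x) = (x - c)*(A - B) := by
  field_simp

lemma ktw_alg2 (x c A B C : ℝ) (hx : x ≠ 0) :
    (x*A - x*B - x*C) - c*((x*A - x*B - x*C)/x) = (x - c)*(A - B - C) := by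
  field_simp

lemma ktw_algP (p c nu A : ℝ) (hp : p ≠ 0) (hnu : nu ≠ 0) :
    nu⁻¹ * ((nu*p*A) - c*((nu*p*A)/p)) = (p - c)*A := by
  field_simp

lemma ktw_deriv_phi {x : ℝ → ℝ} {xd : ℝ} (c : ℝ) {t : ℝ} (hx : HasDerivAt x xd t)
    (hxt : x t ≠ 0) :
    HasDerivAt (fun s => x s - c * Real.log (x s)) (xd - c * (xd / x t)) t :=
  hx.sub ((hx.log hxt).const_mul c)

lemma ktw_coord_upper {c x B : ℝ} (hc : 0 < c) (hx : 0 < x) (hphi : x - c*Real.log x ≤ B) :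
    x ≤ 2*B - 2*c + 2*c*Real.log (2*c) := by
  have := ktw_phi_upper hc hx; linarith

lemma ktw_log_bound {c x B C : ℝ} (hc : 0 < c) (hx : 0 < x)
    (hphi : x - c*Real.log x ≤ B) (hxC : x ≤ C) :
    |Real.log x| ≤ |B/c| + |C| := by
  rw [abs_le]
  constructor
  · have h1 := ktw_phi_log_lower hc hx
    have h2 : (x - c*Real.log x)/c ≤ B/c := by gcongr
    have h3 : B/c ≤ |B/c| := le_abs_self _
    have h4 : (0:ℝ) ≤ |C| := abs_nonneg _
    linarith
  · have h5 := Real.log_le_sub_one_of_pos hx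
    have h6 : C ≤ |C| := le_abs_self _
    have h7 : (0:ℝ) ≤ |B/c| := abs_nonneg _
    linarith

lemma ktw_term_bound {x a wc Sv p z CSb CPb CZb : ℝ} (hx : 0 < x) (hxS : x ≤ Sv)
    (hSb : Sv ≤ CSb) (hp : 0 < p) (hpC : p ≤ CPb) (hz : 0 < z) (hzC : z ≤ CZb)
    (ha : 0 < a) (hw : 0 < wc) :
    |x*(a - wc - Sv) - x*p - x*z| ≤ CSb*(a + wc + CSb + CPb + CZb) := by
  have hS0 : 0 < Sv := lt_of_lt_of_le hx hxS
  have hxC : x ≤ CSb := le_trans hxS hSb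
  rw [abs_le]
  constructor
  · nlinarith
  · nlinarith

lemma ktw_term_bound2 {x a wc Sv z CSb CZb : ℝ} (hx : 0 < x) (hxS : x ≤ Sv)
    (hSb : Sv ≤ CSb) (hz : 0 < z) (hzC : z ≤ CZb) (ha : 0 < a) (hw : 0 < wc) :
    |x*(a - wc - Sv) - x*z| ≤ CSb*(a + wc + CSb + CZb) := by
  have hS0 : 0 < Sv := lt_of_lt_of_le hx hxS
  have hxC : x ≤ CSb := le_trans hxS hSb
  rw [abs_le]
  constructor
  · nlinarith
  · nlinarith
set_option maxHeartbeats 4000000 in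
theorem ktw_resistant_and_zooplankton_converge
    (m : ℕ) (hm : 0 < m) (r : Fin (m+1) → ℝ) (w : ℝ) (ν e : Fin m → ℝ) (lam q : ℝ)
    (hr : ∀ i, 0 < r i) (hw : 0 < w) (hν : ∀ i, 0 < ν i) (he : ∀ i, 0 < e i)
    (hlam : 0 < lam) (hq : 0 < q)
    -- existence conditions for the positive equilibrium
    (hc1 : w < r (Fin.last m)) (hc2 : ∀ i : Fin m, r (Fin.last m) < r i.castSucc)
    (hc3 : ∑ i, e i < q) (hc4 : q < r (Fin.last m) - w)
    -- a positive solution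
    (H : Fin (m+1) → ℝ → ℝ) (P : Fin m → ℝ → ℝ) (Z : ℝ → ℝ)
    (hH : ∀ i : Fin m, ∀ t ∈ Set.Ici (0:ℝ), HasDerivAt (H i.castSucc)
      (H i.castSucc t * (r i.castSucc - w - ∑ j, H j t)
        - H i.castSucc t * P i t - H i.castSucc t * Z t) t)
    (hHn : ∀ t ∈ Set.Ici (0:ℝ), HasDerivAt (H (Fin.last m))
      (H (Fin.last m) t * (r (Fin.last m) - w - ∑ j, H j t) - H (Fin.last m) t * Z t) t)
    (hPode : ∀ i : Fin m, ∀ t ∈ Set.Ici (0:ℝ), HasDerivAt (P i)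
      (ν i * P i t * (H i.castSucc t - e i)) t)
    (hZode : ∀ t ∈ Set.Ici (0:ℝ), HasDerivAt Z (lam * Z t * (∑ j, H j t - q)) t)
    (hpos : ∀ t ∈ Set.Ici (0:ℝ), (∀ i, 0 < H i t) ∧ (∀ j, 0 < P j t) ∧ 0 < Z t) :
    Filter.Tendsto (H (Fin.last m)) Filter.atTop (nhds (q - ∑ i, e i)) ∧
    Filter.Tendsto Z Filter.atTop (nhds (r (Fin.last m) - w - q)) := by
  set n := Fin.last m with hn
  set Zst : ℝ := r n - w - q with hZst
  set Hnst : ℝ := q - ∑ i, e i with hHnst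
  set Pst : Fin m → ℝ := fun i => r i.castSucc - r n with hPst
  have hZstpos : 0 < Zst := by rw [hZst]; linarith
  have hHnstpos : 0 < Hnst := by rw [hHnst]; linarith
  have hPstpos : ∀ i, 0 < Pst i := fun i => by rw [hPst]; simp; linarith [hc2 i]
  set S : ℝ → ℝ := fun t => ∑ j, H j t with hS
  set u : ℝ → ℝ := fun t => S t - q with hu
  have hHpos : ∀ t ∈ Set.Ici (0:ℝ), ∀ j, 0 < H j t := fun t ht => (hpos t ht).1
  have hPpos : ∀ t ∈ Set.Ici (0:ℝ), ∀ i, 0 < P i t := fun t ht => (hpos t ht).2.1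
  have hZpos : ∀ t ∈ Set.Ici (0:ℝ), 0 < Z t := fun t ht => (hpos t ht).2.2
  have hsum_split : ∀ t, ∑ i : Fin m, H i.castSucc t = S t - H n t := by
    intro t
    rw [hS]
    simp only
    rw [Fin.sum_univ_castSucc (f := fun j => H j t)]
    ring
  -- the Lyapunov function
  set V : ℝ → ℝ := fun t =>
    (∑ i, (H i.castSucc t - e i * Real.log (H i.castSucc t)))
    + (H n t - Hnst * Real.log (H n t))
    + (∑ i, (ν i)⁻¹ * (P i t - Pst i * Real.log (P i t)))
    + lam⁻¹ * (Z t - Zst * Real.log (Z t)) with hV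
  have hVd : ∀ t ∈ Set.Ici (0:ℝ), HasDerivAt V (-(u t)^2) t := by
    intro t ht
    have hHp := hHpos t ht
    have hPp := hPpos t ht
    have hZp := hZpos t ht
    -- first sum
    have h1 : HasDerivAt (fun s => ∑ i, (H i.castSucc s - e i * Real.log (H i.castSucc s)))
        (∑ i, (H i.castSucc t - e i) * ((r i.castSucc - w - S t) - P i t - Z t)) t := by
      have := HasDerivAt.fun_sum (u := (Finset.univ : Finset (Fin m)))
        (A := fun i s => H i.castSucc s - e i * Real.log (H i.castSucc s))
        (A' := fun i => (H i.castSucc t - e i) * ((r i.castSucc - w - S t) - P i t - Z t))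
        (fun i _ => by
          have hd := ktw_deriv_phi (e i) (hH i t ht) (ne_of_gt (hHp _))
          refine hd.congr_deriv ?_
          have hne : H i.castSucc t ≠ 0 := ne_of_gt (hHp _)
          simp only [hS]
          field_simp)
      exact this
    -- H n term
    have h2 : HasDerivAt (fun s => H n s - Hnst * Real.log (H n s))
        ((H n t - Hnst) * ((r n - w - S t) - Z t)) t := by
      have hd := ktw_deriv_phi Hnst (hHn t ht) (ne_of_gt (hHp _))
      convert hd using 1
      have hne : H n t ≠ 0 := ne_of_gt (hHp _)
      simp only [hS]
      field_simp
    -- P sum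
    have h3 : HasDerivAt (fun s => ∑ i, (ν i)⁻¹ * (P i s - Pst i * Real.log (P i s)))
        (∑ i, (P i t - Pst i) * (H i.castSucc t - e i)) t := by
      have := HasDerivAt.fun_sum (u := (Finset.univ : Finset (Fin m)))
        (A := fun i s => (ν i)⁻¹ * (P i s - Pst i * Real.log (P i s)))
        (A' := fun i => (P i t - Pst i) * (H i.castSucc t - e i))
        (fun i _ => by
          have hd := (ktw_deriv_phi (Pst i) (hPode i t ht) (ne_of_gt (hPp _))).const_mul (ν i)⁻¹
          refine hd.congr_deriv ?_
          have hne : P i t ≠ 0 := ne_of_gt (hPp _)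
          have hνne : ν i ≠ 0 := ne_of_gt (hν i)
          field_simp)
      exact this
    -- Z term
    have h4 : HasDerivAt (fun s => lam⁻¹ * (Z s - Zst * Real.log (Z s)))
        ((Z t - Zst) * (S t - q)) t := by
      have hd := (ktw_deriv_phi Zst (hZode t ht) (ne_of_gt hZp)).const_mul lam⁻¹
      refine hd.congr_deriv ?_
      have hne : Z t ≠ 0 := ne_of_gt hZp
      have hlamne : lam ≠ 0 := ne_of_gt hlam
      simp only [hS]
      field_simp
    -- combine
    have hcomb := ((h1.add h2).add h3).add h4
    -- algebraic identity
    have halg : (∑ i, (H i.castSucc t - e i) * ((r i.castSucc - w - S t) - P i t - Z t))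
        + (H n t - Hnst) * ((r n - w - S t) - Z t)
        + (∑ i, (P i t - Pst i) * (H i.castSucc t - e i))
        + (Z t - Zst) * (S t - q) = -(u t)^2 := by
      have e1 : (∑ i, (H i.castSucc t - e i) * ((r i.castSucc - w - S t) - P i t - Z t))
          + (∑ i, (P i t - Pst i) * (H i.castSucc t - e i))
          = ∑ i, (H i.castSucc t - e i) * ((q - S t) + (Zst - Z t)) := by
        rw [← Finset.sum_add_distrib]
        apply Finset.sum_congr rfl
        intro i _
        simp only [hPst, hZst]
        ring
      have e2 : ∑ i, (H i.castSucc t - e i) * ((q - S t) + (Zst - Z t))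
          = ((S t - H n t) - ∑ i, e i) * ((q - S t) + (Zst - Z t)) := by
        rw [← Finset.sum_mul, Finset.sum_sub_distrib, hsum_split]
      calc (∑ i, (H i.castSucc t - e i) * ((r i.castSucc - w - S t) - P i t - Z t))
          + (H n t - Hnst) * ((r n - w - S t) - Z t)
          + (∑ i, (P i t - Pst i) * (H i.castSucc t - e i))
          + (Z t - Zst) * (S t - q)
          = (∑ i, (H i.castSucc t - e i) * ((q - S t) + (Zst - Z t)))
            + (H n t - Hnst) * ((r n - w - S t) - Z t)
            + (Z t - Zst) * (S t - q) := by rw [← e1]; ring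
        _ = ((S t - H n t) - ∑ i, e i) * ((q - S t) + (Zst - Z t))
            + (H n t - Hnst) * ((q - S t) + (Zst - Z t))
            + (Z t - Zst) * (S t - q) := by
            rw [e2, hZst]
            ring
        _ = -(u t)^2 := by
            rw [hHnst, hu]
            ring
    rw [← halg]
    exact hcomb
    -- V is nonincreasing on [0, ∞)
  have hVle : ∀ t ∈ Set.Ici (0:ℝ), V t ≤ V 0 := by
    intro t ht
    exact ktw_anti ht (fun s hs => hVd s (Set.mem_Ici.2 hs.1))
      (fun s hs => neg_nonpos.2 (sq_nonneg _))
  -- minima of the summands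
  set mS1 : ℝ := ∑ i, (e i - e i * Real.log (e i)) with hmS1
  set mHn : ℝ := Hnst - Hnst * Real.log Hnst with hmHn
  set mS2 : ℝ := ∑ i, (ν i)⁻¹ * (Pst i - Pst i * Real.log (Pst i)) with hmS2
  set mZ : ℝ := lam⁻¹ * (Zst - Zst * Real.log Zst) with hmZ
  have hT1lb : ∀ t ∈ Set.Ici (0:ℝ),
      mS1 ≤ ∑ i, (H i.castSucc t - e i * Real.log (H i.castSucc t)) :=
    fun t ht => Finset.sum_le_sum (fun i _ => ktw_phi_lower (he i) (hHpos t ht _))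
  have hT2lb : ∀ t ∈ Set.Ici (0:ℝ), mHn ≤ H n t - Hnst * Real.log (H n t) :=
    fun t ht => ktw_phi_lower hHnstpos (hHpos t ht _)
  have hT3lb_i : ∀ t ∈ Set.Ici (0:ℝ), ∀ i, (ν i)⁻¹ * (Pst i - Pst i * Real.log (Pst i))
      ≤ (ν i)⁻¹ * (P i t - Pst i * Real.log (P i t)) :=
    fun t ht i => mul_le_mul_of_nonneg_left (ktw_phi_lower (hPstpos i) (hPpos t ht i))
      (le_of_lt (inv_pos.2 (hν i)))
  have hT3lb : ∀ t ∈ Set.Ici (0:ℝ),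
      mS2 ≤ ∑ i, (ν i)⁻¹ * (P i t - Pst i * Real.log (P i t)) :=
    fun t ht => Finset.sum_le_sum (fun i _ => hT3lb_i t ht i)
  have hT4lb : ∀ t ∈ Set.Ici (0:ℝ), mZ ≤ lam⁻¹ * (Z t - Zst * Real.log (Z t)) :=
    fun t ht => mul_le_mul_of_nonneg_left (ktw_phi_lower hZstpos (hZpos t ht))
      (le_of_lt (inv_pos.2 hlam))
  have hVt : ∀ t, V t = (∑ i, (H i.castSucc t - e i * Real.log (H i.castSucc t)))
      + (H n t - Hnst * Real.log (H n t))
      + (∑ i, (ν i)⁻¹ * (P i t - Pst i * Real.log (P i t)))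
      + lam⁻¹ * (Z t - Zst * Real.log (Z t)) := fun t => rfl
  clear_value V
  clear_value Zst Hnst Pst u
  clear_value mS1 mHn mS2 mZ
  -- upper bound on total host population S
  set CS : ℝ := 2*(V 0 - mS2 - mZ - (∑ i, (e i - e i * Real.log (2*e i)))
      - (Hnst - Hnst*Real.log (2*Hnst))) with hCS
  have hSle : ∀ t ∈ Set.Ici (0:ℝ), S t ≤ CS := by
    intro t ht
    have h1 : ∀ i : Fin m, H i.castSucc t/2 + (e i - e i*Real.log (2*e i))
        ≤ H i.castSucc t - e i*Real.log (H i.castSucc t) := fun i => by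
      have := ktw_phi_upper (he i) (hHpos t ht i.castSucc); linarith
    have hs1 : (S t - H n t)/2 + ∑ i, (e i - e i*Real.log (2*e i))
        ≤ ∑ i, (H i.castSucc t - e i * Real.log (H i.castSucc t)) := by
      have h2 := Finset.sum_le_sum (fun i (_ : i ∈ Finset.univ) => h1 i)
      rw [Finset.sum_add_distrib, ← Finset.sum_div, hsum_split] at h2
      exact h2
    have hs2 : H n t/2 + (Hnst - Hnst*Real.log (2*Hnst))
        ≤ H n t - Hnst * Real.log (H n t) := by
      have := ktw_phi_upper hHnstpos (hHpos t ht n); linarith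
    have h3 := hT3lb t ht
    have h4 := hT4lb t ht
    have h5 := hVle t ht
    rw [hVt t] at h5
    rw [hCS]
    linarith
  have hHleS : ∀ t ∈ Set.Ici (0:ℝ), ∀ j, H j t ≤ S t := by
    intro t ht j
    exact Finset.single_le_sum (fun k _ => le_of_lt (hHpos t ht k)) (Finset.mem_univ j)
  have hCSpos : 0 < CS := lt_of_lt_of_le (hHpos 0 Set.self_mem_Ici n)
    (le_trans (hHleS 0 Set.self_mem_Ici n) (hSle 0 Set.self_mem_Ici))
  clear_value CS
  -- bounds for Z and log Z
  set BZ : ℝ := lam*(V 0 - mS1 - mHn - mS2) with hBZ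
  have hphiZ : ∀ t ∈ Set.Ici (0:ℝ), Z t - Zst*Real.log (Z t) ≤ BZ := by
    intro t ht
    have h5 := hVle t ht
    rw [hVt t] at h5
    have h1 := hT1lb t ht
    have h2 := hT2lb t ht
    have h3 := hT3lb t ht
    have h6 : lam⁻¹ * (Z t - Zst*Real.log (Z t)) ≤ V 0 - mS1 - mHn - mS2 := by linarith
    rw [hBZ]
    calc Z t - Zst*Real.log (Z t)
        = lam * (lam⁻¹ * (Z t - Zst*Real.log (Z t))) := by
          field_simp
      _ ≤ lam * (V 0 - mS1 - mHn - mS2) := by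
          exact mul_le_mul_of_nonneg_left h6 (le_of_lt hlam)
  set CZ : ℝ := 2*BZ - 2*Zst + 2*Zst*Real.log (2*Zst) with hCZ
  have hZle : ∀ t ∈ Set.Ici (0:ℝ), Z t ≤ CZ :=
    fun t ht => ktw_coord_upper hZstpos (hZpos t ht) (hphiZ t ht)
  set LZ : ℝ := |BZ/Zst| + |CZ| with hLZ
  have hlogZ : ∀ t ∈ Set.Ici (0:ℝ), |Real.log (Z t)| ≤ LZ :=
    fun t ht => ktw_log_bound hZstpos (hZpos t ht) (hphiZ t ht) (hZle t ht)
  clear_value BZ CZ LZ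
  -- bounds for H n and log (H n)
  set BHn : ℝ := V 0 - mS1 - mS2 - mZ with hBHn
  have hphiHn : ∀ t ∈ Set.Ici (0:ℝ), H n t - Hnst*Real.log (H n t) ≤ BHn := by
    intro t ht
    have h5 := hVle t ht
    rw [hVt t] at h5
    have h1 := hT1lb t ht
    have h3 := hT3lb t ht
    have h4 := hT4lb t ht
    rw [hBHn]
    linarith
  set LHn : ℝ := |BHn/Hnst| + |CS| with hLHn
  have hlogHn : ∀ t ∈ Set.Ici (0:ℝ), |Real.log (H n t)| ≤ LHn :=
    fun t ht => ktw_log_bound hHnstpos (hHpos t ht n) (hphiHn t ht)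
      (le_trans (hHleS t ht n) (hSle t ht))
  clear_value BHn LHn
  -- bounds for P i and log (P i)
  set BP : Fin m → ℝ := fun i => ν i * ((V 0 - mS1 - mHn - mZ - mS2)
      + (ν i)⁻¹ * (Pst i - Pst i * Real.log (Pst i))) with hBP
  have hphiP : ∀ t ∈ Set.Ici (0:ℝ), ∀ i, P i t - Pst i * Real.log (P i t) ≤ BP i := by
    intro t ht i
    have h5 := hVle t ht
    rw [hVt t] at h5
    have h1 := hT1lb t ht
    have h2 := hT2lb t ht
    have h4 := hT4lb t ht
    -- isolate the i-th term of the P-sum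
    have h6 : (ν i)⁻¹ * (P i t - Pst i * Real.log (P i t))
        + (mS2 - (ν i)⁻¹ * (Pst i - Pst i * Real.log (Pst i)))
        ≤ ∑ j, (ν j)⁻¹ * (P j t - Pst j * Real.log (P j t)) := by
      have e1 : ∑ j, (ν j)⁻¹ * (P j t - Pst j * Real.log (P j t))
          = (ν i)⁻¹ * (P i t - Pst i * Real.log (P i t))
            + ∑ j ∈ Finset.univ.erase i, (ν j)⁻¹ * (P j t - Pst j * Real.log (P j t)) :=
        (Finset.add_sum_erase _ _ (Finset.mem_univ i)).symm
      have e2 : ∑ j ∈ Finset.univ.erase i, (ν j)⁻¹ * (Pst j - Pst j * Real.log (Pst j))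
          = mS2 - (ν i)⁻¹ * (Pst i - Pst i * Real.log (Pst i)) := by
        rw [hmS2]
        exact Finset.sum_erase_eq_sub (Finset.mem_univ i)
      have e3 : ∑ j ∈ Finset.univ.erase i, (ν j)⁻¹ * (Pst j - Pst j * Real.log (Pst j))
          ≤ ∑ j ∈ Finset.univ.erase i, (ν j)⁻¹ * (P j t - Pst j * Real.log (P j t)) :=
        Finset.sum_le_sum (fun j _ => hT3lb_i t ht j)
      rw [e1]
      rw [e2] at e3
      linarith
    have h7 : (ν i)⁻¹ * (P i t - Pst i * Real.log (P i t))
        ≤ (V 0 - mS1 - mHn - mZ - mS2) + (ν i)⁻¹ * (Pst i - Pst i * Real.log (Pst i)) := by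
      linarith
    have h8 := mul_le_mul_of_nonneg_left h7 (le_of_lt (hν i))
    rw [hBP]
    simp only
    rw [mul_inv_cancel_left₀ (ne_of_gt (hν i))] at h8
    exact h8
  set CP : Fin m → ℝ := fun i => 2*BP i - 2*Pst i + 2*Pst i*Real.log (2*Pst i) with hCP
  have hPle : ∀ t ∈ Set.Ici (0:ℝ), ∀ i, P i t ≤ CP i :=
    fun t ht i => ktw_coord_upper (hPstpos i) (hPpos t ht i) (hphiP t ht i)
  set LP : Fin m → ℝ := fun i => |BP i/Pst i| + |CP i| with hLP
  have hlogP : ∀ t ∈ Set.Ici (0:ℝ), ∀ i, |Real.log (P i t)| ≤ LP i :=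
    fun t ht i => ktw_log_bound (hPstpos i) (hPpos t ht i) (hphiP t ht i) (hPle t ht i)
  clear_value BP CP LP
  -- derivative of S and its bound
  set Sd : ℝ → ℝ := fun t => (∑ i, (H i.castSucc t * (r i.castSucc - w - S t)
      - H i.castSucc t * P i t - H i.castSucc t * Z t))
      + (H n t * (r n - w - S t) - H n t * Z t) with hSdd
  have hSderiv : ∀ t ∈ Set.Ici (0:ℝ), HasDerivAt S (Sd t) t := by
    intro t ht
    have h1 : HasDerivAt (fun s => ∑ i : Fin m, H i.castSucc s)
        (∑ i, (H i.castSucc t * (r i.castSucc - w - S t)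
          - H i.castSucc t * P i t - H i.castSucc t * Z t)) t := by
      apply HasDerivAt.fun_sum
      intro i _
      have := hH i t ht
      rw [hS]
      simp only
      exact this
    have h2 : HasDerivAt (H n) (H n t * (r n - w - S t) - H n t * Z t) t := by
      have := hHn t ht
      rw [hS]
      simp only
      exact this
    have h12 := h1.add h2
    have heq : (fun s => (∑ i : Fin m, H i.castSucc s) + H n s) = S := by
      funext s
      rw [hS]
      simp only
      exact (Fin.sum_univ_castSucc (f := fun j => H j s)).symm
    rw [hSdd]
    simp only
    refine HasDerivAt.congr_of_eventuallyEq h12 ?_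
    filter_upwards with s
    rw [hS]
    simp only
    exact Fin.sum_univ_castSucc (f := fun j => H j s)
  set K : ℝ := (∑ i, CS*(r i.castSucc + w + CS + CP i + CZ)) + CS*(r n + w + CS + CZ)
    with hK
  have hSdbound : ∀ t ∈ Set.Ici (0:ℝ), |Sd t| ≤ K := by
    intro t ht
    rw [hSdd]
    simp only
    calc |(∑ i, (H i.castSucc t * (r i.castSucc - w - S t)
          - H i.castSucc t * P i t - H i.castSucc t * Z t))
          + (H n t * (r n - w - S t) - H n t * Z t)|
        ≤ |∑ i, (H i.castSucc t * (r i.castSucc - w - S t)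
          - H i.castSucc t * P i t - H i.castSucc t * Z t)|
          + |H n t * (r n - w - S t) - H n t * Z t| := abs_add_le _ _
      _ ≤ (∑ i, |H i.castSucc t * (r i.castSucc - w - S t)
          - H i.castSucc t * P i t - H i.castSucc t * Z t|)
          + |H n t * (r n - w - S t) - H n t * Z t| := by
          gcongr
          exact Finset.abs_sum_le_sum_abs _ _
      _ ≤ (∑ i, CS*(r i.castSucc + w + CS + CP i + CZ)) + CS*(r n + w + CS + CZ) := by
          gcongr with i hi
          · exact ktw_term_bound (hHpos t ht i.castSucc) (hHleS t ht i.castSucc) (hSle t ht)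
              (hPpos t ht i) (hPle t ht i) (hZpos t ht) (hZle t ht) (hr i.castSucc) hw
          · exact ktw_term_bound2 (hHpos t ht n) (hHleS t ht n) (hSle t ht)
              (hZpos t ht) (hZle t ht) (hr n) hw
      _ = K := by rw [hK]
  clear_value Sd
  -- V is bounded
  set CgV : ℝ := |V 0| + |mS1 + mHn + mS2 + mZ| with hCgV
  have hVbound : ∀ t ∈ Set.Ici (0:ℝ), |V t| ≤ CgV := by
    intro t ht
    have h5 := hVle t ht
    have h1 := hT1lb t ht
    have h2 := hT2lb t ht
    have h3 := hT3lb t ht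
    have h4 := hT4lb t ht
    have h6 := hVt t
    rw [abs_le]
    constructor
    · have h7 : -(|mS1 + mHn + mS2 + mZ|) ≤ mS1 + mHn + mS2 + mZ := neg_abs_le _
      have h8 : (0:ℝ) ≤ |V 0| := abs_nonneg _
      rw [hCgV]
      linarith
    · have h9 : V 0 ≤ |V 0| := le_abs_self _
      have h10 : (0:ℝ) ≤ |mS1 + mHn + mS2 + mZ| := abs_nonneg _
      rw [hCgV]
      linarith
  clear_value CgV
  -- derivative of u
  have hud : ∀ t ∈ Set.Ici (0:ℝ), HasDerivAt u (Sd t) t := by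
    intro t ht
    rw [hu]
    exact (hSderiv t ht).sub_const q
  have hKpos : 0 < K := by
    rw [hK]
    have hCZ : 0 < CZ := lt_of_lt_of_le (hZpos 0 Set.self_mem_Ici) (hZle 0 Set.self_mem_Ici)
    have h1 : 0 < CS*(r n + w + CS + CZ) := by
      have := hr n
      nlinarith [hCSpos]
    have h2 : (0:ℝ) ≤ ∑ i, CS*(r i.castSucc + w + CS + CZ + CP i) := by
      apply Finset.sum_nonneg
      intro i _
      have hCP : 0 < CP i := lt_of_lt_of_le (hPpos 0 Set.self_mem_Ici i)
        (hPle 0 Set.self_mem_Ici i)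
      have := hr i.castSucc
      nlinarith [hCSpos, hCZ]
    have h3 : ∑ i, CS*(r i.castSucc + w + CS + CP i + CZ)
        = ∑ i, CS*(r i.castSucc + w + CS + CZ + CP i) := by
      apply Finset.sum_congr rfl; intro i _; ring
    rw [h3]
    linarith
  clear_value K
  -- S → q
  have htendu : Filter.Tendsto u Filter.atTop (nhds 0) := by
    rw [Metric.tendsto_atTop]
    intro ε hε
    have hcpos : (0:ℝ) < (ε/2)^2 := by positivity
    have h1 : ∀ᶠ t in Filter.atTop, u t < ε := by
      apply ktw_coreB (g := V) (f' := Sd) (g' := fun t => -(u t)^2) hε hcpos hKpos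
        hud hVd hSdbound (fun t ht => neg_nonpos.2 (sq_nonneg _)) hVbound
      intro t ht hfu
      nlinarith
    have h2 : ∀ᶠ t in Filter.atTop, -(u t) < ε := by
      apply ktw_coreB (f := fun t => -(u t)) (g := V) (f' := fun t => -(Sd t)) (g' := fun t => -(u t)^2) hε hcpos hKpos
        (fun t ht => (hud t ht).neg) hVd
        (fun t ht => by rw [abs_neg]; exact hSdbound t ht)
        (fun t ht => neg_nonpos.2 (sq_nonneg _)) hVbound
      intro t ht hfu
      nlinarith
    obtain ⟨T1, hT1⟩ := Filter.eventually_atTop.1 h1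
    obtain ⟨T2, hT2⟩ := Filter.eventually_atTop.1 h2
    refine ⟨max T1 T2, fun t ht => ?_⟩
    rw [Real.dist_eq, sub_zero, abs_lt]
    constructor
    · have := hT2 t (le_trans (le_max_right _ _) ht); linarith
    · exact hT1 t (le_trans (le_max_left _ _) ht)
    -- Step C : Z → Zst
  set b : ℝ → ℝ := fun t => lam⁻¹ * (Real.log (Z t) - Real.log Zst) with hb
  have hlamne : lam ≠ 0 := ne_of_gt hlam
  have hbd : ∀ t ∈ Set.Ici (0:ℝ), HasDerivAt b (u t) t := by
    intro t ht
    have hz := hZpos t ht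
    have hzne : Z t ≠ 0 := ne_of_gt hz
    have hd := (((hZode t ht).log hzne).sub_const (Real.log Zst)).const_mul lam⁻¹
    rw [hb]
    refine hd.congr_deriv ?_
    simp only [hu, hS]
    field_simp
  set gC : ℝ → ℝ := fun t => Real.log (H n t) + lam⁻¹ * Real.log (Z t) with hgC
  have hgCd : ∀ t ∈ Set.Ici (0:ℝ), HasDerivAt gC (Zst - Z t) t := by
    intro t ht
    have hz := hZpos t ht
    have hzne : Z t ≠ 0 := ne_of_gt hz
    have hh := hHpos t ht n
    have hhne : H n t ≠ 0 := ne_of_gt hh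
    have hd := ((hHn t ht).log hhne).fun_add (((hZode t ht).log hzne).const_mul lam⁻¹)
    rw [hgC]
    refine hd.congr_deriv ?_
    rw [hZst]
    field_simp
    ring
  set CgC : ℝ := LHn + lam⁻¹ * LZ with hCgC
  have hgCb : ∀ t ∈ Set.Ici (0:ℝ), |gC t| ≤ CgC := by
    intro t ht
    rw [hgC, hCgC]
    calc |Real.log (H n t) + lam⁻¹ * Real.log (Z t)|
        ≤ |Real.log (H n t)| + |lam⁻¹ * Real.log (Z t)| := abs_add_le _ _
      _ = |Real.log (H n t)| + lam⁻¹ * |Real.log (Z t)| := by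
          rw [abs_mul, abs_of_pos (inv_pos.2 hlam)]
      _ ≤ LHn + lam⁻¹ * LZ := by
          have h1 := hlogZ t ht
          have h2 := hlogHn t ht
          have h3 : lam⁻¹ * |Real.log (Z t)| ≤ lam⁻¹ * LZ :=
            mul_le_mul_of_nonneg_left h1 (le_of_lt (inv_pos.2 hlam))
          linarith
  have hble : ∀ t ∈ Set.Ici (0:ℝ), ∀ {δ : ℝ}, δ ≤ b t →
      Zst * Real.exp (lam * δ) ≤ Z t := by
    intro t ht δ hδ
    have hz := hZpos t ht
    have h1 : lam * δ ≤ Real.log (Z t) - Real.log Zst := by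
      have h2 := mul_le_mul_of_nonneg_left hδ (le_of_lt hlam)
      have h3 : lam * b t = Real.log (Z t) - Real.log Zst := by
        rw [hb]; field_simp
      linarith
    calc Zst * Real.exp (lam * δ) = Real.exp (Real.log Zst + lam * δ) := by
          rw [Real.exp_add, Real.exp_log hZstpos]
      _ ≤ Real.exp (Real.log (Z t)) := Real.exp_le_exp.2 (by linarith)
      _ = Z t := Real.exp_log hz
  have hbge : ∀ t ∈ Set.Ici (0:ℝ), ∀ {δ : ℝ}, b t ≤ -δ →
      Z t ≤ Zst * Real.exp (-(lam * δ)) := by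
    intro t ht δ hδ
    have hz := hZpos t ht
    have h1 : Real.log (Z t) - Real.log Zst ≤ -(lam * δ) := by
      have h2 := mul_le_mul_of_nonneg_left hδ (le_of_lt hlam)
      have h3 : lam * b t = Real.log (Z t) - Real.log Zst := by
        rw [hb]; field_simp
      nlinarith
    calc Z t = Real.exp (Real.log (Z t)) := (Real.exp_log hz).symm
      _ ≤ Real.exp (Real.log Zst + -(lam * δ)) := Real.exp_le_exp.2 (by linarith)
      _ = Zst * Real.exp (-(lam * δ)) := by rw [Real.exp_add, Real.exp_log hZstpos]
  have htendb : Filter.Tendsto b Filter.atTop (nhds 0) := by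
    rw [Metric.tendsto_atTop]
    intro ε hε
    have hexp1 : 1 < Real.exp (lam * (ε/2)) := by
      have := Real.add_one_le_exp (lam * (ε/2))
      nlinarith
    have hexp2 : Real.exp (-(lam * (ε/2))) < 1 := by
      rw [Real.exp_neg]
      exact inv_lt_one_of_one_lt₀ hexp1
    have h1 : ∀ᶠ t in Filter.atTop, b t < ε := by
      apply ktw_coreA (g := gC) (f' := u) (g' := fun t => Zst - Z t)
        (c := Zst * (Real.exp (lam * (ε/2)) - 1)) (T₀ := 0) hε
        (by nlinarith) hbd hgCd htendu hgCb
      intro t ht hbt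
      have h2 := hble t ht hbt
      nlinarith
    have h2 : ∀ᶠ t in Filter.atTop, -(b t) < ε := by
      apply ktw_coreA (f := fun t => -(b t)) (g := fun t => -(gC t)) (f' := fun t => -(u t))
        (g' := fun t => Z t - Zst)
        (c := Zst * (1 - Real.exp (-(lam * (ε/2))))) (T₀ := 0) hε
        (by nlinarith) (fun t ht => (hbd t ht).neg)
        (fun t ht => by
          have := (hgCd t ht).fun_neg
          refine this.congr_deriv ?_
          ring)
        (by simpa using htendu.neg)
        (fun t ht => by rw [abs_neg]; exact hgCb t ht)
      intro t ht hbt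
      have h3 : b t ≤ -(ε/2) := by linarith
      have h4 := hbge t ht h3
      nlinarith
    obtain ⟨T1, hT1⟩ := Filter.eventually_atTop.1 h1
    obtain ⟨T2, hT2⟩ := Filter.eventually_atTop.1 h2
    refine ⟨max T1 T2, fun t ht => ?_⟩
    rw [Real.dist_eq, sub_zero, abs_lt]
    constructor
    · have := hT2 t (le_trans (le_max_right _ _) ht); linarith
    · exact hT1 t (le_trans (le_max_left _ _) ht)
  have hZeq : ∀ t ∈ Set.Ici (0:ℝ), Z t = Zst * Real.exp (lam * b t) := by
    intro t ht
    have hz := hZpos t ht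
    have h3 : lam * b t = Real.log (Z t) - Real.log Zst := by
      rw [hb]; field_simp
    rw [h3, Real.exp_sub, Real.exp_log hz, Real.exp_log hZstpos]
    field_simp
  have htendZ : Filter.Tendsto Z Filter.atTop (nhds Zst) := by
    have h1 : Filter.Tendsto (fun t => lam * b t) Filter.atTop (nhds 0) := by
      have := htendb.const_mul lam
      simpa using this
    have h3 := (Real.continuous_exp.tendsto 0).comp h1
    rw [Real.exp_zero] at h3
    have h4 : Filter.Tendsto (fun t => Zst * Real.exp (lam * b t)) Filter.atTop (nhds Zst) := by
      have := h3.const_mul Zst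
      simpa using this
    apply Filter.Tendsto.congr' _ h4
    filter_upwards [Filter.eventually_ge_atTop 0] with t ht
    exact (hZeq t ht).symm
  have htendv : Filter.Tendsto (fun t => Z t - Zst) Filter.atTop (nhds 0) := by
    simpa using htendZ.sub_const Zst
    -- Step D : H n → Hnst
  set gD : ℝ → ℝ := fun t => ∑ i, (ν i)⁻¹ * Real.log (P i t) with hgD
  have hgDd : ∀ t ∈ Set.Ici (0:ℝ), HasDerivAt gD ((S t - H n t) - ∑ i, e i) t := by
    intro t ht
    have hder := HasDerivAt.fun_sum (u := (Finset.univ : Finset (Fin m)))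
      (A := fun i s => (ν i)⁻¹ * Real.log (P i s))
      (A' := fun i => H i.castSucc t - e i)
      (fun i _ => by
        have hpne : P i t ≠ 0 := ne_of_gt (hPpos t ht i)
        have hνne : ν i ≠ 0 := ne_of_gt (hν i)
        have := ((hPode i t ht).log hpne).const_mul (ν i)⁻¹
        refine this.congr_deriv ?_
        field_simp)
    rw [hgD]
    have heq : (∑ i, (H i.castSucc t - e i)) = (S t - H n t) - ∑ i, e i := by
      rw [Finset.sum_sub_distrib, hsum_split]
    rw [← heq]
    exact hder
  set CgD : ℝ := ∑ i, (ν i)⁻¹ * LP i with hCgD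
  have hgDb : ∀ t ∈ Set.Ici (0:ℝ), |gD t| ≤ CgD := by
    intro t ht
    rw [hgD, hCgD]
    calc |∑ i, (ν i)⁻¹ * Real.log (P i t)|
        ≤ ∑ i, |(ν i)⁻¹ * Real.log (P i t)| := Finset.abs_sum_le_sum_abs _ _
      _ ≤ ∑ i, (ν i)⁻¹ * LP i := by
          apply Finset.sum_le_sum
          intro i _
          rw [abs_mul, abs_of_pos (inv_pos.2 (hν i))]
          exact mul_le_mul_of_nonneg_left (hlogP t ht i) (le_of_lt (inv_pos.2 (hν i)))
  -- f = H n - Hnst and its derivative tends to 0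
  have hfd : ∀ t ∈ Set.Ici (0:ℝ), HasDerivAt (fun s => H n s - Hnst)
      (H n t * (r n - w - S t) - H n t * Z t) t := by
    intro t ht
    have := (hHn t ht).sub_const Hnst
    rw [hS]
    simp only
    exact this
  have hfdbound : ∀ t ∈ Set.Ici (0:ℝ), |H n t * (r n - w - S t) - H n t * Z t|
      ≤ CS * |u t + (Z t - Zst)| := by
    intro t ht
    have heq : H n t * (r n - w - S t) - H n t * Z t = H n t * (-(u t + (Z t - Zst))) := by
      simp only [hu]
      rw [hZst]
      ring
    rw [heq, abs_mul, abs_neg, abs_of_pos (hHpos t ht n)]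
    exact mul_le_mul_of_nonneg_right (le_trans (hHleS t ht n) (hSle t ht)) (abs_nonneg _)
  have htendfd : Filter.Tendsto (fun t => H n t * (r n - w - S t) - H n t * Z t)
      Filter.atTop (nhds 0) := by
    have hbig : Filter.Tendsto (fun t => CS * |u t + (Z t - Zst)|) Filter.atTop (nhds 0) := by
      have h1 := ((htendu.add htendv).abs).const_mul CS
      simpa using h1
    have hbigneg : Filter.Tendsto (fun t => -(CS * |u t + (Z t - Zst)|)) Filter.atTop (nhds 0) := by
      have := hbig.neg
      simpa using this
    apply tendsto_of_tendsto_of_tendsto_of_le_of_le' hbigneg hbig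
    · filter_upwards [Filter.eventually_ge_atTop 0] with t ht
      exact (abs_le.1 (hfdbound t ht)).1
    · filter_upwards [Filter.eventually_ge_atTop 0] with t ht
      exact (abs_le.1 (hfdbound t ht)).2
  have htendf : Filter.Tendsto (fun t => H n t - Hnst) Filter.atTop (nhds 0) := by
    rw [Metric.tendsto_atTop]
    intro ε hε
    obtain ⟨T₀, hT₀⟩ := (Metric.tendsto_atTop.1 htendu) (ε/4) (by linarith)
    have hT₀' : ∀ t ≥ T₀, |u t| < ε/4 := by
      intro t ht
      have := hT₀ t ht
      rwa [Real.dist_eq, sub_zero] at this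
    have hgkey : ∀ t ∈ Set.Ici (0:ℝ), (S t - H n t) - ∑ i, e i = u t - (H n t - Hnst) := by
      intro t ht
      simp only [hu]
      rw [hHnst]
      ring
    have h1 : ∀ᶠ t in Filter.atTop, H n t - Hnst < ε := by
      apply ktw_coreA (f := fun t => H n t - Hnst) (g := gD)
        (f' := fun t => H n t * (r n - w - S t) - H n t * Z t)
        (g' := fun t => (S t - H n t) - ∑ i, e i)
        (c := ε/4) (T₀ := max T₀ 0) hε (by linarith)
        hfd hgDd htendfd hgDb
      intro t ht hbt
      have ht0 : t ∈ Set.Ici (0:ℝ) := le_trans (le_max_right _ _) ht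
      rw [hgkey t ht0]
      have := hT₀' t (le_trans (le_max_left _ _) ht)
      have := abs_lt.1 this
      linarith
    have h2 : ∀ᶠ t in Filter.atTop, -(H n t - Hnst) < ε := by
      apply ktw_coreA (f := fun t => -(H n t - Hnst)) (g := fun t => -(gD t))
        (f' := fun t => -(H n t * (r n - w - S t) - H n t * Z t))
        (g' := fun t => -((S t - H n t) - ∑ i, e i))
        (c := ε/4) (T₀ := max T₀ 0) hε (by linarith)
        (fun t ht => (hfd t ht).neg) (fun t ht => (hgDd t ht).neg)
        (by simpa using htendfd.neg)
        (fun t ht => by rw [abs_neg]; exact hgDb t ht)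
      intro t ht hbt
      have ht0 : t ∈ Set.Ici (0:ℝ) := le_trans (le_max_right _ _) ht
      rw [hgkey t ht0]
      have := hT₀' t (le_trans (le_max_left _ _) ht)
      have := abs_lt.1 this
      linarith
    obtain ⟨T1, hT1⟩ := Filter.eventually_atTop.1 h1
    obtain ⟨T2, hT2⟩ := Filter.eventually_atTop.1 h2
    refine ⟨max T1 T2, fun t ht => ?_⟩
    rw [Real.dist_eq, sub_zero, abs_lt]
    constructor
    · have := hT2 t (le_trans (le_max_right _ _) ht); linarith
    · exact hT1 t (le_trans (le_max_left _ _) ht)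
  have htendHn : Filter.Tendsto (H n) Filter.atTop (nhds Hnst) := by
    have := htendf.add_const Hnst
    simpa using this
  exact ⟨htendHn, htendZ⟩
end

section
/- For the nested-infection-network system H_i' = H_i(r_i − Σ_j H_j − Σ_{j≥i} P_j), P_i' = e_i n_i P_i(Σ_{j≤i} H_j − 1/e_i), 1 ≤ i ≤ n, with positive parameters, a positive equilibrium exists if r_1 > r_2 > ⋯ > r_n > Q_n and e_1 > e_2 > ⋯ > e_n, where Q_n = 1/e_1 + (1/e_2 − 1/e_1) + ⋯ + (1/e_n − 1/e_{n−1}) = 1/e_n; and when it exists the positive equilibrium is unique. -/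
lemma finIicZero (n : ℕ) (i : Fin n) (hi : (i:ℕ) = 0) : Finset.Iic i = {i} := by
  ext j; simp only [Finset.mem_Iic, Finset.mem_singleton, Fin.le_def, Fin.ext_iff]; omega
lemma finIciLast (n : ℕ) (i : Fin n) (hi : (i:ℕ) = n-1) : Finset.Ici i = {i} := by
  ext j; have := j.isLt
  simp only [Finset.mem_Ici, Finset.mem_singleton, Fin.le_def, Fin.ext_iff]; omega
lemma finIicSucc (n k : ℕ) (h : k+1 < n) :
    Finset.Iic (⟨k+1, h⟩ : Fin n) = insert ⟨k+1, h⟩ (Finset.Iic ⟨k, by omega⟩) := by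
  ext j; simp only [Finset.mem_Iic, Finset.mem_insert, Fin.le_def, Fin.ext_iff]; omega
lemma finIciSucc (n k : ℕ) (h : k+1 < n) :
    Finset.Ici (⟨k, by omega⟩ : Fin n) = insert (⟨k, by omega⟩ : Fin n) (Finset.Ici ⟨k+1, h⟩) := by
  ext j; simp only [Finset.mem_Ici, Finset.mem_insert, Fin.le_def, Fin.ext_iff]; omega
lemma finIio (n : ℕ) (i : Fin n) (hi : (i:ℕ) ≠ 0) :
    Finset.Iio i = Finset.Iic (⟨(i:ℕ)-1, Nat.lt_of_le_of_lt (Nat.sub_le _ _) i.isLt⟩ : Fin n) := by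
  ext j; simp only [Finset.mem_Iio, Finset.mem_Iic, Fin.lt_def, Fin.le_def]; omega
lemma finIio0 (n : ℕ) (i : Fin n) (hi : (i:ℕ) = 0) : Finset.Iio i = ∅ := by
  ext j; simp only [Finset.mem_Iio, Finset.notMem_empty, iff_false, Fin.lt_def]; omega
lemma finIoi (n : ℕ) (i : Fin n) (hi : (i:ℕ) ≠ n-1) :
    Finset.Ioi i = Finset.Ici (⟨(i:ℕ)+1, by have := i.isLt; omega⟩ : Fin n) := by
  ext j; have := j.isLt; have := i.isLt
  simp only [Finset.mem_Ioi, Finset.mem_Ici, Fin.lt_def, Fin.le_def]; omega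
lemma finIoiL (n : ℕ) (i : Fin n) (hi : (i:ℕ) = n-1) : Finset.Ioi i = ∅ := by
  ext j; have := j.isLt
  simp only [Finset.mem_Ioi, Finset.notMem_empty, iff_false, Fin.lt_def]; omega

noncomputable def Hsol (n : ℕ) (e : Fin n → ℝ) : Fin n → ℝ := fun i =>
  if (i:ℕ) = 0 then 1 / e i
  else 1 / e i - 1 / e ⟨(i:ℕ)-1, Nat.lt_of_le_of_lt (Nat.sub_le _ _) i.isLt⟩

noncomputable def Psol (n : ℕ) (r e : Fin n → ℝ) : Fin n → ℝ := fun i =>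
  if h : (i:ℕ) = n-1 then r i - 1 / e i
  else r i - r ⟨(i:ℕ)+1, by have := i.isLt; omega⟩

lemma Hsol_sum (n : ℕ) (e : Fin n → ℝ) :
    ∀ (k : ℕ) (h : k < n), ∑ j ∈ Finset.Iic (⟨k, h⟩ : Fin n), Hsol n e j = 1 / e ⟨k, h⟩ := by
  intro k
  induction k with
  | zero =>
    intro h
    rw [finIicZero n ⟨0, h⟩ rfl, Finset.sum_singleton]
    simp [Hsol]
  | succ k ih =>
    intro h
    rw [finIicSucc n k h, Finset.sum_insert (by
      simp only [Finset.mem_Iic, Fin.le_def]; omega)]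
    rw [ih (by omega)]
    have : Hsol n e ⟨k+1, h⟩ = 1 / e ⟨k+1, h⟩ - 1 / e ⟨k, by omega⟩ := by
      simp [Hsol]
    rw [this]; ring

lemma Psol_sum (n : ℕ) (hn : 0 < n) (r e : Fin n → ℝ) :
    ∀ (k : ℕ) (h : k < n), ∑ j ∈ Finset.Ici (⟨k, h⟩ : Fin n), Psol n r e j
      = r ⟨k, h⟩ - 1 / e ⟨n-1, by omega⟩ := by
  have base : ∀ (h : n-1 < n), ∑ j ∈ Finset.Ici (⟨n-1, h⟩ : Fin n), Psol n r e j
      = r ⟨n-1, h⟩ - 1 / e ⟨n-1, by omega⟩ := by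
    intro h
    rw [finIciLast n ⟨n-1, h⟩ rfl, Finset.sum_singleton]
    simp [Psol]
  have main : ∀ (m k : ℕ) (h : k < n), n - 1 - k ≤ m →
      ∑ j ∈ Finset.Ici (⟨k, h⟩ : Fin n), Psol n r e j = r ⟨k, h⟩ - 1 / e ⟨n-1, by omega⟩ := by
    intro m
    induction m with
    | zero =>
      intro k h hle
      have hk : k = n - 1 := by omega
      subst hk
      exact base h
    | succ m ih =>
      intro k h hle
      by_cases hk : k = n - 1
      · subst hk; exact base h
      · have h1 : k + 1 < n := by omega
        rw [finIciSucc n k h1, Finset.sum_insert (by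
          simp only [Finset.mem_Ici, Fin.le_def]; omega)]
        rw [ih (k+1) h1 (by omega)]
        have : Psol n r e ⟨k, h⟩ = r ⟨k, h⟩ - r ⟨k+1, h1⟩ := by
          simp [Psol, hk]
        rw [this]; ring
  exact fun k h => main (n-1-k) k h le_rfl

/-- Equilibrium equations of the nested-infection-network system with `n` bacteria
and `n` viruses, where virus `i` infects bacteria `1,…,i`. -/
def NestedEquilibrium (n : ℕ) (r : Fin n → ℝ) (ν e : Fin n → ℝ)
    (H P : Fin n → ℝ) : Prop :=
  (∀ i : Fin n, H i * (r i - ∑ j, H j - ∑ j ∈ Finset.Ici i, P j) = 0) ∧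
  (∀ i : Fin n, e i * ν i * P i * ((∑ j ∈ Finset.Iic i, H j) - 1 / e i) = 0)

theorem nested_network_positive_equilibrium
    (n : ℕ) (hn : 0 < n) (r ν e : Fin n → ℝ)
    (hr : ∀ i, 0 < r i) (hν : ∀ i, 0 < ν i) (he : ∀ i, 0 < e i) :
    ((StrictAnti r ∧ 1 / e ⟨n-1, by omega⟩ < r (⟨n-1, by omega⟩ : Fin n) ∧ StrictAnti e) →
      ∃ (H P : Fin n → ℝ), (∀ i, 0 < H i) ∧ (∀ i, 0 < P i) ∧
        NestedEquilibrium n r ν e H P) ∧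
    (∀ (H P H' P' : Fin n → ℝ),
      (∀ i, 0 < H i) → (∀ i, 0 < P i) → NestedEquilibrium n r ν e H P →
      (∀ i, 0 < H' i) → (∀ i, 0 < P' i) → NestedEquilibrium n r ν e H' P' →
      H = H' ∧ P = P') := by
  have hLlt : n - 1 < n := by omega
  set L : Fin n := ⟨n-1, hLlt⟩ with hLdef
  have hUniv : (Finset.univ : Finset (Fin n)) = Finset.Iic L := by
    ext j; have := j.isLt
    simp only [Finset.mem_univ, Finset.mem_Iic, true_iff, Fin.le_def, hLdef, Fin.val_mk]; omega
  constructor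
  · rintro ⟨hrA, hrQ, heA⟩
    refine ⟨Hsol n e, Psol n r e, ?_, ?_, ?_, ?_⟩
    · -- positivity of H
      intro i
      by_cases hi : (i:ℕ) = 0
      · have hH0 : Hsol n e i = 1 / e i := by simp [Hsol, hi]
        rw [hH0]; exact div_pos one_pos (he i)
      · simp only [Hsol, if_neg hi]
        have hlt : (⟨(i:ℕ)-1, Nat.lt_of_le_of_lt (Nat.sub_le _ _) i.isLt⟩ : Fin n) < i := by
          rw [Fin.lt_def]; simp only; omega
        have := heA hlt
        have h1 : 1 / e i > 1 / e ⟨(i:ℕ)-1, Nat.lt_of_le_of_lt (Nat.sub_le _ _) i.isLt⟩ :=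
          one_div_lt_one_div_of_lt (he i) this
        linarith
    · -- positivity of P
      intro i
      by_cases hi : (i:ℕ) = n-1
      · simp only [Psol, dif_pos hi]
        have hiL : i = L := Fin.ext hi
        rw [hiL]; linarith [hrQ]
      · simp only [Psol, dif_neg hi]
        have hlt : i < (⟨(i:ℕ)+1, by have := i.isLt; omega⟩ : Fin n) := by
          rw [Fin.lt_def]; simp only; omega
        linarith [hrA hlt]
    · -- first equilibrium equation
      intro i
      have hU : ∑ j, Hsol n e j = 1 / e L := by
        rw [hUniv]; exact Hsol_sum n e (n-1) hLlt
      have hS : ∑ j ∈ Finset.Ici i, Psol n r e j = r i - 1 / e L := by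
        have := Psol_sum n hn r e i i.isLt
        simpa using this
      rw [hU, hS]; ring
    · -- second equilibrium equation
      intro i
      have hS : ∑ j ∈ Finset.Iic i, Hsol n e j = 1 / e i := by
        have := Hsol_sum n e i i.isLt
        simpa using this
      rw [hS]; ring
  · -- uniqueness
    intro H P H' P' hH hP hEq hH' hP' hEq'
    have main : ∀ H P : Fin n → ℝ, (∀ i, 0 < H i) → (∀ i, 0 < P i) →
        NestedEquilibrium n r ν e H P →
        (∀ i, ∑ j ∈ Finset.Iic i, H j = 1 / e i) ∧
        (∀ i, ∑ j ∈ Finset.Ici i, P j = r i - 1 / e L) := by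
      rintro H P hH hP ⟨h1, h2⟩
      have hs1 : ∀ i, ∑ j ∈ Finset.Iic i, H j = 1 / e i := by
        intro i
        have h2i := h2 i
        have hne : e i * ν i * P i ≠ 0 :=
          ne_of_gt (mul_pos (mul_pos (he i) (hν i)) (hP i))
        have := (mul_eq_zero.1 h2i).resolve_left hne
        linarith
      refine ⟨hs1, fun i => ?_⟩
      have hne : H i ≠ 0 := ne_of_gt (hH i)
      have hz : r i - ∑ j, H j - ∑ j ∈ Finset.Ici i, P j = 0 :=
        (mul_eq_zero.1 (h1 i)).resolve_left hne
      have hU : ∑ j, H j = 1 / e L := by rw [hUniv]; exact hs1 L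
      linarith
    obtain ⟨s1, s2⟩ := main H P hH hP hEq
    obtain ⟨s1', s2'⟩ := main H' P' hH' hP' hEq'
    constructor
    · funext i
      have d : H i + ∑ j ∈ Finset.Iio i, H j = ∑ j ∈ Finset.Iic i, H j := by
        rw [← Finset.Iio_insert i, Finset.sum_insert (by simp)]
      have d' : H' i + ∑ j ∈ Finset.Iio i, H' j = ∑ j ∈ Finset.Iic i, H' j := by
        rw [← Finset.Iio_insert i, Finset.sum_insert (by simp)]
      by_cases hi : (i:ℕ) = 0
      · rw [finIio0 n i hi, Finset.sum_empty] at d d'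
        rw [s1 i] at d; rw [s1' i] at d'
        linarith
      · rw [finIio n i hi] at d d'
        rw [s1 i, s1 ⟨(i:ℕ)-1, Nat.lt_of_le_of_lt (Nat.sub_le _ _) i.isLt⟩] at d
        rw [s1' i, s1' ⟨(i:ℕ)-1, Nat.lt_of_le_of_lt (Nat.sub_le _ _) i.isLt⟩] at d'
        linarith
    · funext i
      have d : P i + ∑ j ∈ Finset.Ioi i, P j = ∑ j ∈ Finset.Ici i, P j := by
        rw [← Finset.Ioi_insert i, Finset.sum_insert (by simp)]
      have d' : P' i + ∑ j ∈ Finset.Ioi i, P' j = ∑ j ∈ Finset.Ici i, P' j := by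
        rw [← Finset.Ioi_insert i, Finset.sum_insert (by simp)]
      by_cases hi : (i:ℕ) = n-1
      · rw [finIoiL n i hi, Finset.sum_empty] at d d'
        rw [s2 i] at d; rw [s2' i] at d'
        linarith
      · rw [finIoi n i hi] at d d'
        rw [s2 i, s2 ⟨(i:ℕ)+1, by have := i.isLt; omega⟩] at d
        rw [s2' i, s2' ⟨(i:ℕ)+1, by have := i.isLt; omega⟩] at d'
        linarith
end
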